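/- arXiv:2212.13605 — 2 statements merged into one kernel-verified Lean document; each statement's English description precedes it below -/
import Mathlib

section
/- Let T be a complete first-order theory with infinite models in a countable language L, let M be an ℵ₁-saturated model of T, and let p ∈ S₁(T) be a simple type, witnessed by C and (D,<). Let S denote the successor function of the discrete order (p(M),<). If f : p(M) → p(M) is a relatively ∅-definable function (its graph equals p(M)² ∩ θ(M²) for some L-formula θ(x,y)), then there exists k ∈ ℤ such that f = Sᵏ, the k-th iterate of S (with negative iterates given by the predecessor function). -/
open FirstOrder FirstOrder.Language Set Cardinal

universe u v w

namespace PaperDef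

variable {L : FirstOrder.Language.{u, v}}

/-- Valuation assigning parameters from `A` their own values and the
`n` free variables the values given by the tuple `x`. -/
def pval {M : Type w} {A : Set M} {n : ℕ} (x : Fin n → M) : ↥A ⊕ Fin n → M :=
  Sum.elim Subtype.val x

variable {M : Type w} [L.Structure M]

/-- The subset of `M` defined by an `L(A)`-formula in one free variable. -/
def defSet (A : Set M) (δ : L.Formula (↥A ⊕ Fin 1)) : Set M :=
  {a | δ.Realize (pval ![a])}

/-- The binary relation on `M` defined by an `L(A)`-formula in two free variables. -/
def defRel (A : Set M) (φ : L.Formula (↥A ⊕ Fin 2)) : M → M → Prop :=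
  fun a b => φ.Realize (pval ![a, b])

/-- The relation defined by `φ`, guarded so as to only hold on the set defined by `δ`
(the paper's convention of writing `x < y` for `x ∈ D ∧ y ∈ D ∧ x < y`). -/
def gRel (A : Set M) (δ : L.Formula (↥A ⊕ Fin 1)) (φ : L.Formula (↥A ⊕ Fin 2)) :
    M → M → Prop :=
  fun a b => a ∈ defSet A δ ∧ b ∈ defSet A δ ∧ defRel A φ a b

/-- The set of realizations in `M` of a set of `L(A)`-formulas in one free variable. -/
def typeSet (A : Set M) (p : Set (L.Formula (↥A ⊕ Fin 1))) : Set M :=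
  {a | ∀ φ ∈ p, φ.Realize (pval ![a])}

/-- A set of `L(A)`-formulas in `n` free variables is finitely satisfiable in `M`. -/
def FinSat (A : Set M) {n : ℕ} (p : Set (L.Formula (↥A ⊕ Fin n))) : Prop :=
  ∀ s : Finset (L.Formula (↥A ⊕ Fin n)), ↑s ⊆ p →
    ∃ x : Fin n → M, ∀ φ ∈ s, Formula.Realize φ (pval x)

/-- A complete `n`-type over `A` (relative to the complete theory of `M` with
parameters in `A`): a maximal finitely satisfiable set of formulas. -/
def IsCompleteType (A : Set M) {n : ℕ} (p : Set (L.Formula (↥A ⊕ Fin n))) : Prop :=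
  FinSat A p ∧ ∀ φ : L.Formula (↥A ⊕ Fin n), φ ∈ p ∨ BoundedFormula.not φ ∈ p

/-- `M` is ℵ₀-saturated: every finitely satisfiable set of formulas in one free
variable with parameters from a finite subset of `M` is realized in `M`. -/
def IsAleph0Saturated (L : FirstOrder.Language.{u, v}) (M : Type w) [L.Structure M] : Prop :=
  ∀ A : Set M, A.Finite → ∀ p : Set (L.Formula (↥A ⊕ Fin 1)),
    FinSat A p → (typeSet A p).Nonempty

/-- `M` is ℵ₁-saturated: every finitely satisfiable set of formulas in one free
variable with parameters from a countable subset of `M` is realized in `M`. -/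
def IsAleph1Saturated (L : FirstOrder.Language.{u, v}) (M : Type w) [L.Structure M] : Prop :=
  ∀ A : Set M, A.Countable → ∀ p : Set (L.Formula (↥A ⊕ Fin 1)),
    FinSat A p → (typeSet A p).Nonempty

/-- The definable closure of `A` in `M`. -/
def dclSet (L : FirstOrder.Language.{u, v}) {M : Type w} [L.Structure M] (A : Set M) : Set M :=
  {a | ∃ φ : L.Formula (↥A ⊕ Fin 1),
    φ.Realize (pval ![a]) ∧ ∀ b : M, φ.Realize (pval ![b]) → b = a}

/-- `r` is a (strict) linear order on the set `D`. -/
def IsLinearOn {X : Type*} (r : X → X → Prop) (D : Set X) : Prop :=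
  (∀ a ∈ D, ¬r a a) ∧
  (∀ a ∈ D, ∀ b ∈ D, ∀ c ∈ D, r a b → r b c → r a c) ∧
  (∀ a ∈ D, ∀ b ∈ D, a = b ∨ r a b ∨ r b a)

/-- The linear order `r` on `D` is discrete: every element other than the maximum
has an immediate successor and every element other than the minimum has an
immediate predecessor. -/
def IsDiscreteOn {X : Type*} (r : X → X → Prop) (D : Set X) : Prop :=
  (∀ a ∈ D, (∃ b ∈ D, r a b) → ∃ b ∈ D, r a b ∧ ∀ c ∈ D, r a c → c = b ∨ r b c) ∧
  (∀ a ∈ D, (∃ b ∈ D, r b a) → ∃ b ∈ D, r b a ∧ ∀ c ∈ D, r c a → c = b ∨ r c b)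

/-- `C` is an initial part of the order `(D, r)`. -/
def IsInitialPart {X : Type*} (r : X → X → Prop) (D C : Set X) : Prop :=
  C ⊆ D ∧ ∀ c ∈ C, ∀ d ∈ D, r d c → d ∈ C

/-- `(C, r)` has order type ω: `C` is infinite and every element has only
finitely many predecessors in `C`. -/
def HasOrderTypeOmega {X : Type*} (r : X → X → Prop) (C : Set X) : Prop :=
  C.Infinite ∧ ∀ c ∈ C, {c' ∈ C | r c' c}.Finite

/-- `p` is a simple type over `A`, witnessed by `C ⊆ dcl(A)` and the `A`-definable
linear order `(D, <)` given by the formulas `δ` (defining `D`) and `lt` (defining `<`). -/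
def IsSimpleWitness (A : Set M) (p : Set (L.Formula (↥A ⊕ Fin 1))) (C : Set M)
    (δ : L.Formula (↥A ⊕ Fin 1)) (lt : L.Formula (↥A ⊕ Fin 2)) : Prop :=
  IsCompleteType A p ∧
  C.Infinite ∧
  C ⊆ dclSet L A ∧
  IsLinearOn (gRel A δ lt) (defSet A δ) ∧
  IsInitialPart (gRel A δ lt) (defSet A δ) C ∧
  HasOrderTypeOmega (gRel A δ lt) C ∧
  ∀ φ : L.Formula (↥A ⊕ Fin 1),
    φ ∈ p ↔ {c ∈ C | ¬φ.Realize (pval ![c])}.Finite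

/-- `b` is the immediate successor of `a` in the order `(P, r)`. -/
def SuccIn {X : Type*} (r : X → X → Prop) (P : Set X) (a b : X) : Prop :=
  a ∈ P ∧ b ∈ P ∧ r a b ∧ ∀ c ∈ P, r a c → c = b ∨ r b c

/-- `zIter S k a b` says that `b = Sᵏ(a)`, where negative iterates of `S` are
interpreted via the (partial) inverse of `S`. -/
def zIter {X : Type*} (S : X → X) (k : ℤ) (a b : X) : Prop :=
  if 0 ≤ k then S^[k.toNat] a = b else S^[(-k).toNat] b = a

/-- Isomorphism as an equivalence relation on countably infinite models of `T`
(with underlying set in `Type 0`). -/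
def countableModelSetoid (T : L.Theory) :
    Setoid {N : Theory.ModelType.{u, v, 0} T // Countable N ∧ Infinite N} where
  r N₁ N₂ := Nonempty (N₁.1 ≃[L] N₂.1)
  iseqv := ⟨fun N => ⟨FirstOrder.Language.Equiv.refl L N.1⟩,
    fun e => e.map FirstOrder.Language.Equiv.symm,
    fun e f => Nonempty.map2 (fun i j => j.comp i) e f⟩

/-- The number of countably infinite models of `T` up to isomorphism. -/
noncomputable def numCountableModels (T : L.Theory) : Cardinal :=
  #(Quotient (countableModelSetoid T))

-- ===== generic combinators =====
section Combinators

lemma pval_empty_eq {n : ℕ} (u : ↥(∅ : Set M) ⊕ Fin n → M) :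
    pval (u ∘ Sum.inr) = u := by
  funext a
  rcases a with ⟨x, hx⟩ | i
  · exact absurd hx (Set.notMem_empty x)
  · rfl

/-- relabel variables -/
def prj {m n : ℕ} (g : Fin m → Fin n) (φ : L.Formula (↥(∅ : Set M) ⊕ Fin m)) :
    L.Formula (↥(∅ : Set M) ⊕ Fin n) :=
  φ.relabel (Sum.map id g)

lemma realize_prj {m n : ℕ} (g : Fin m → Fin n) (φ : L.Formula (↥(∅ : Set M) ⊕ Fin m))
    (v : Fin n → M) :
    (prj g φ).Realize (pval v) ↔ φ.Realize (pval (v ∘ g)) := by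
  rw [prj, Formula.realize_relabel]
  constructor <;> intro h <;> [skip; skip] <;>
  · convert h using 2
    funext a
    rcases a with ⟨x, hx⟩ | i
    · exact absurd hx (Set.notMem_empty x)
    · rfl

/-- existential quantification over the last variable -/
noncomputable def exQ {n : ℕ} (φ : L.Formula (↥(∅ : Set M) ⊕ Fin (n + 1))) :
    L.Formula (↥(∅ : Set M) ⊕ Fin n) :=
  (φ.relabel (fun a => match a with
    | Sum.inl e => Sum.inl (Sum.inl e)
    | Sum.inr i => if h : (i : ℕ) < n then Sum.inl (Sum.inr ⟨i, h⟩) else Sum.inr (0 : Fin 1))).iExs (Fin 1)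

lemma realize_exQ {n : ℕ} (φ : L.Formula (↥(∅ : Set M) ⊕ Fin (n + 1))) (v : Fin n → M) :
    (exQ φ).Realize (pval v) ↔ ∃ b : M, φ.Realize (pval (Fin.snoc v b)) := by
  rw [exQ, Formula.realize_iExs]
  simp only [Formula.realize_relabel]
  constructor
  · rintro ⟨i, h⟩
    refine ⟨i 0, ?_⟩
    convert h using 1
    funext a
    rcases a with ⟨x, hx⟩ | j
    · exact absurd hx (Set.notMem_empty x)
    · simp only [pval, Sum.elim_inr]
      induction j using Fin.lastCases with
      | last =>
        have : ¬((Fin.last n : Fin (n+1)) : ℕ) < n := by simp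
        simp [this]
      | cast k =>
        have hk : ((k.castSucc : Fin (n+1)) : ℕ) < n := k.isLt
        simp [hk]
  · rintro ⟨b, h⟩
    refine ⟨fun _ => b, ?_⟩
    convert h using 1
    funext a
    rcases a with ⟨x, hx⟩ | j
    · exact absurd hx (Set.notMem_empty x)
    · simp only [pval, Sum.elim_inr]
      induction j using Fin.lastCases with
      | last =>
        have : ¬((Fin.last n : Fin (n+1)) : ℕ) < n := by simp
        simp [this]
      | cast k =>
        have hk : ((k.castSucc : Fin (n+1)) : ℕ) < n := k.isLt
        simp [hk]

noncomputable def allQ {n : ℕ} (φ : L.Formula (↥(∅ : Set M) ⊕ Fin (n + 1))) :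
    L.Formula (↥(∅ : Set M) ⊕ Fin n) :=
  Formula.not (exQ (Formula.not φ))

lemma realize_allQ {n : ℕ} (φ : L.Formula (↥(∅ : Set M) ⊕ Fin (n + 1))) (v : Fin n → M) :
    (allQ φ).Realize (pval v) ↔ ∀ b : M, φ.Realize (pval (Fin.snoc v b)) := by
  rw [allQ, Formula.realize_not, realize_exQ]
  push_neg
  simp only [Formula.realize_not, not_not]

def eqF {n : ℕ} (i j : Fin n) : L.Formula (↥(∅ : Set M) ⊕ Fin n) :=
  Term.equal (Term.var (Sum.inr i)) (Term.var (Sum.inr j))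

lemma realize_eqF {n : ℕ} (i j : Fin n) (v : Fin n → M) :
    (eqF (L := L) i j).Realize (pval v) ↔ v i = v j := by
  simp [eqF, Formula.realize_equal, pval]

end Combinators


-- ===== context bundle =====

structure Ctx (L : FirstOrder.Language.{u, v}) (M : Type w) [L.Structure M] where
  p : Set (L.Formula (↥(∅ : Set M) ⊕ Fin 1))
  C : Set M
  δ : L.Formula (↥(∅ : Set M) ⊕ Fin 1)
  lt : L.Formula (↥(∅ : Set M) ⊕ Fin 2)
  hp : IsSimpleWitness (∅ : Set M) p C δ lt
  S : M → M
  hS : ∀ a ∈ typeSet (∅ : Set M) p, SuccIn (gRel (∅ : Set M) δ lt) (typeSet (∅ : Set M) p) a (S a)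
  fn : M → M
  hfmap : ∀ a ∈ typeSet (∅ : Set M) p, fn a ∈ typeSet (∅ : Set M) p
  θf : L.Formula (↥(∅ : Set M) ⊕ Fin 2)
  hgraph : ∀ a b : M,
    (a ∈ typeSet (∅ : Set M) p ∧ b ∈ typeSet (∅ : Set M) p ∧ defRel (∅ : Set M) θf a b) ↔
    (a ∈ typeSet (∅ : Set M) p ∧ fn a = b)
  hsat : IsAleph1Saturated L M

namespace Ctx

variable {L : FirstOrder.Language.{u, v}} {M : Type w} [L.Structure M] (Γ : Ctx L M)

def r : M → M → Prop := gRel (∅ : Set M) Γ.δ Γ.lt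

def Ds : Set M := defSet (∅ : Set M) Γ.δ

def Ps : Set M := typeSet (∅ : Set M) Γ.p

-- basic order facts
lemma r_irrefl {a : M} (ha : a ∈ Γ.Ds) : ¬Γ.r a a := Γ.hp.2.2.2.1.1 a ha

lemma r_trans {a b c : M} (h1 : Γ.r a b) (h2 : Γ.r b c) : Γ.r a c :=
  Γ.hp.2.2.2.1.2.1 a h1.1 b h1.2.1 c h2.2.1 h1 h2

lemma r_trichot {a b : M} (ha : a ∈ Γ.Ds) (hb : b ∈ Γ.Ds) :
    a = b ∨ Γ.r a b ∨ Γ.r b a := Γ.hp.2.2.2.1.2.2 a ha b hb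

lemma r_left {a b : M} (h : Γ.r a b) : a ∈ Γ.Ds := h.1
lemma r_right {a b : M} (h : Γ.r a b) : b ∈ Γ.Ds := h.2.1

lemma r_asymm {a b : M} (h1 : Γ.r a b) (h2 : Γ.r b a) : False :=
  Γ.r_irrefl h1.1 (Γ.r_trans h1 h2)

lemma C_sub_D : Γ.C ⊆ Γ.Ds := Γ.hp.2.2.2.2.1.1

lemma C_initial {c d : M} (hc : c ∈ Γ.C) (hd : d ∈ Γ.Ds) (h : Γ.r d c) : d ∈ Γ.C :=
  Γ.hp.2.2.2.2.1.2 c hc d hd h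

lemma C_inf : Γ.C.Infinite := Γ.hp.2.1

lemma C_preds_finite {c : M} (hc : c ∈ Γ.C) : {c' ∈ Γ.C | Γ.r c' c}.Finite :=
  Γ.hp.2.2.2.2.2.1.2 c hc

-- p-calculus
lemma mem_p_iff (φ : L.Formula (↥(∅ : Set M) ⊕ Fin 1)) :
    φ ∈ Γ.p ↔ {c ∈ Γ.C | ¬φ.Realize (pval ![c])}.Finite := Γ.hp.2.2.2.2.2.2 φ

lemma realizes_of_mem_P {a : M} (ha : a ∈ Γ.Ps) {φ} (hφ : φ ∈ Γ.p) :
    φ.Realize (pval ![a]) := ha φ hφ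

lemma mem_p_of_infinite {φ : L.Formula (↥(∅ : Set M) ⊕ Fin 1)}
    (h : {c ∈ Γ.C | φ.Realize (pval ![c])}.Infinite) : φ ∈ Γ.p := by
  rcases Γ.hp.1.2 φ with hφ | hφ
  · exact hφ
  · exfalso
    have := (Γ.mem_p_iff (BoundedFormula.not φ)).mp hφ
    simp only [Formula.realize_not, not_not] at this
    exact h this

lemma mem_p_of_mem_P {a : M} (ha : a ∈ Γ.Ps)
    {φ : L.Formula (↥(∅ : Set M) ⊕ Fin 1)} (h : φ.Realize (pval ![a])) : φ ∈ Γ.p := by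
  rcases Γ.hp.1.2 φ with hφ | hφ
  · exact hφ
  · exact absurd h (by simpa [Formula.realize_not] using Γ.realizes_of_mem_P ha hφ)

lemma cofin_of_mem_p {φ} (h : φ ∈ Γ.p) :
    {c ∈ Γ.C | ¬φ.Realize (pval ![c])}.Finite := (Γ.mem_p_iff φ).mp h

/-- δ as a member of p, hence P ⊆ D -/
lemma delta_mem_p : Γ.δ ∈ Γ.p := by
  rw [Γ.mem_p_iff]
  convert Set.finite_empty
  rw [Set.eq_empty_iff_forall_notMem]
  rintro c ⟨hc, hnd⟩
  exact hnd (Γ.C_sub_D hc)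

lemma P_sub_D : Γ.Ps ⊆ Γ.Ds := fun a ha => Γ.realizes_of_mem_P ha Γ.delta_mem_p

-- position function on C
noncomputable def pos (c : M) : ℕ := {c' ∈ Γ.C | Γ.r c' c}.ncard

lemma pos_strictMono {c c' : M} (hc : c ∈ Γ.C) (hc' : c' ∈ Γ.C) (h : Γ.r c c') :
    Γ.pos c < Γ.pos c' := by
  have hfin' := Γ.C_preds_finite hc'
  have hsub : insert c {x ∈ Γ.C | Γ.r x c} ⊆ {x ∈ Γ.C | Γ.r x c'} := by
    rintro x (rfl | ⟨hx1, hx2⟩)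
    · exact ⟨hc, h⟩
    · exact ⟨hx1, Γ.r_trans hx2 h⟩
  have hfinc : {x ∈ Γ.C | Γ.r x c}.Finite :=
    hfin'.subset (fun x hx => hsub (Set.mem_insert_of_mem _ hx))
  have hcc : c ∉ {x ∈ Γ.C | Γ.r x c} := fun hx => Γ.r_irrefl (Γ.C_sub_D hc) hx.2
  have h1 : Γ.pos c + 1 = (insert c {x ∈ Γ.C | Γ.r x c}).ncard := by
    rw [Set.ncard_insert_of_notMem hcc hfinc]; rfl
  have h2 : (insert c {x ∈ Γ.C | Γ.r x c}).ncard ≤ Γ.pos c' :=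
    Set.ncard_le_ncard hsub hfin'
  omega

lemma r_iff_pos_lt {c c' : M} (hc : c ∈ Γ.C) (hc' : c' ∈ Γ.C) :
    Γ.r c c' ↔ Γ.pos c < Γ.pos c' := by
  constructor
  · exact Γ.pos_strictMono hc hc'
  · intro h
    rcases Γ.r_trichot (Γ.C_sub_D hc) (Γ.C_sub_D hc') with rfl | h1 | h1
    · omega
    · exact h1
    · exact absurd (Γ.pos_strictMono hc' hc h1) (by omega)

lemma pos_injOn : Set.InjOn Γ.pos Γ.C := by
  intro c hc c' hc' h
  rcases Γ.r_trichot (Γ.C_sub_D hc) (Γ.C_sub_D hc') with rfl | h1 | h1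
  · rfl
  · exact absurd (Γ.pos_strictMono hc hc' h1) (by omega)
  · exact absurd (Γ.pos_strictMono hc' hc h1) (by omega)

lemma pos_pred_step {c : M} (hc : c ∈ Γ.C) (hpos : 0 < Γ.pos c) :
    ∃ c' ∈ Γ.C, Γ.r c' c ∧ Γ.pos c' + 1 = Γ.pos c := by
  have hfin := Γ.C_preds_finite hc
  have hne : {x ∈ Γ.C | Γ.r x c}.Nonempty := by
    rw [Set.nonempty_iff_ne_empty]
    intro hemp
    rw [Ctx.pos, hemp] at hpos
    simp at hpos
  obtain ⟨c', hc', hmax⟩ := Set.exists_max_image _ Γ.pos hfin hne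
  refine ⟨c', hc'.1, hc'.2, ?_⟩
  have heq : {x ∈ Γ.C | Γ.r x c} = insert c' {x ∈ Γ.C | Γ.r x c'} := by
    ext x
    constructor
    · rintro ⟨hx1, hx2⟩
      rcases Γ.r_trichot (Γ.C_sub_D hx1) (Γ.C_sub_D hc'.1) with rfl | h1 | h1
      · exact Set.mem_insert _ _
      · exact Set.mem_insert_of_mem _ ⟨hx1, h1⟩
      · exact absurd (hmax x ⟨hx1, hx2⟩)
          (by simpa using Γ.pos_strictMono hc'.1 hx1 h1)
    · rintro (rfl | ⟨hx1, hx2⟩)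
      · exact hc'
      · exact ⟨hx1, Γ.r_trans hx2 hc'.2⟩
  have hfin' : {x ∈ Γ.C | Γ.r x c'}.Finite := Γ.C_preds_finite hc'.1
  have hcc : c' ∉ {x ∈ Γ.C | Γ.r x c'} := fun hx => Γ.r_irrefl (Γ.C_sub_D hc'.1) hx.2
  have h2 : Γ.pos c = (insert c' {x ∈ Γ.C | Γ.r x c'}).ncard := by rw [Ctx.pos, heq]
  rw [Set.ncard_insert_of_notMem hcc hfin'] at h2
  have h3 : Γ.pos c' = {x ∈ Γ.C | Γ.r x c'}.ncard := rfl
  omega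

lemma pos_exists_of_le : ∀ m : ℕ, ∀ c ∈ Γ.C, Γ.pos c = m → ∀ n ≤ m, ∃ c' ∈ Γ.C, Γ.pos c' = n := by
  intro m
  induction m using Nat.strong_induction_on with
  | _ m ih =>
    intro c hc hpos n hn
    rcases eq_or_lt_of_le hn with rfl | hlt
    · exact ⟨c, hc, hpos⟩
    · have h0 : 0 < Γ.pos c := by omega
      obtain ⟨c', hc', _, hstep⟩ := Γ.pos_pred_step hc h0
      exact ih (m - 1) (by omega) c' hc' (by omega) n (by omega)

lemma pos_unbounded : ∀ n : ℕ, ∃ c ∈ Γ.C, n ≤ Γ.pos c := by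
  intro n
  by_contra hcon
  push_neg at hcon
  have : Γ.C ⊆ Γ.pos ⁻¹' (Set.Iio n) := fun c hc => hcon c hc
  have hfin : (Γ.C).Finite := Set.Finite.of_finite_image
    ((Set.finite_Iio n).subset (by rintro _ ⟨c, hc, rfl⟩; exact hcon c hc)) Γ.pos_injOn
  exact Γ.C_inf hfin

lemma pos_surj (n : ℕ) : ∃ c ∈ Γ.C, Γ.pos c = n := by
  obtain ⟨c, hc, hn⟩ := Γ.pos_unbounded n
  exact Γ.pos_exists_of_le _ c hc rfl n hn

/-- enumeration of C in order -/
noncomputable def en (n : ℕ) : M := (Γ.pos_surj n).choose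

lemma en_mem (n : ℕ) : Γ.en n ∈ Γ.C := (Γ.pos_surj n).choose_spec.1

lemma en_pos (n : ℕ) : Γ.pos (Γ.en n) = n := (Γ.pos_surj n).choose_spec.2

lemma en_pos_eq {c : M} (hc : c ∈ Γ.C) : Γ.en (Γ.pos c) = c :=
  Γ.pos_injOn (Γ.en_mem _) hc (Γ.en_pos _)

lemma en_r {m n : ℕ} (h : m < n) : Γ.r (Γ.en m) (Γ.en n) := by
  rw [Γ.r_iff_pos_lt (Γ.en_mem m) (Γ.en_mem n), Γ.en_pos, Γ.en_pos]; exact h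

/-- cofinite-in-C sets contain a tail -/
lemma cofinite_iff_tail (X : Set M) :
    {c ∈ Γ.C | c ∉ X}.Finite ↔ ∃ N : ℕ, ∀ c ∈ Γ.C, N ≤ Γ.pos c → c ∈ X := by
  constructor
  · intro hfin
    rcases Set.eq_empty_or_nonempty {c ∈ Γ.C | c ∉ X} with hemp | hne
    · exact ⟨0, fun c hc _ => by_contra fun hx => by
        rw [Set.eq_empty_iff_forall_notMem] at hemp; exact hemp c ⟨hc, hx⟩⟩
    · obtain ⟨c₀, hc₀, hmax⟩ := Set.exists_max_image _ Γ.pos hfin hne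
      refine ⟨Γ.pos c₀ + 1, fun c hc hpos => by_contra fun hx => ?_⟩
      have := hmax c ⟨hc, hx⟩
      omega
  · rintro ⟨N, hN⟩
    have : {c ∈ Γ.C | c ∉ X} ⊆ {c ∈ Γ.C | Γ.pos c < N} := by
      rintro c ⟨hc, hx⟩
      refine ⟨hc, ?_⟩
      by_contra h
      exact hx (hN c hc (by omega))
    refine Set.Finite.subset ?_ this
    have himg : Set.InjOn Γ.pos {c ∈ Γ.C | Γ.pos c < N} :=
      Γ.pos_injOn.mono (fun c hc => hc.1)
    exact Set.Finite.of_finite_image ((Set.finite_Iio N).subset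
      (by rintro _ ⟨c, hc, rfl⟩; exact hc.2)) himg

lemma infinite_iff_unbounded (X : Set M) :
    {c ∈ Γ.C | c ∈ X}.Infinite ↔ ∀ N : ℕ, ∃ c ∈ Γ.C, N ≤ Γ.pos c ∧ c ∈ X := by
  constructor
  · intro hinf N
    by_contra hcon
    push_neg at hcon
    have : {c ∈ Γ.C | c ∈ X} ⊆ {c ∈ Γ.C | Γ.pos c < N} := by
      rintro c ⟨hc, hx⟩
      refine ⟨hc, ?_⟩
      by_contra h
      exact absurd hx (hcon c hc (by omega))
    refine hinf (Set.Finite.subset ?_ this)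
    exact Set.Finite.of_finite_image ((Set.finite_Iio N).subset
      (by rintro _ ⟨c, hc, rfl⟩; exact hc.2)) (Γ.pos_injOn.mono (fun c hc => hc.1))
  · intro h hfin
    obtain ⟨N, hN⟩ := (Γ.cofinite_iff_tail {x | x ∉ X}).mp (by
      convert hfin using 2
      ext c
      simp)
    obtain ⟨c, hc, hpos, hx⟩ := h N
    exact hN c hc hpos hx



end Ctx
-- ===== vector helpers =====
section VecHelpers
variable {M : Type w}

@[simp] lemma vec2_0 (a b : M) : ![a, b] 0 = a := rfl
@[simp] lemma vec2_1 (a b : M) : ![a, b] 1 = b := rfl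
@[simp] lemma vec3_0 (a b c : M) : ![a, b, c] 0 = a := rfl
@[simp] lemma vec3_1 (a b c : M) : ![a, b, c] 1 = b := rfl
@[simp] lemma vec3_2 (a b c : M) : ![a, b, c] 2 = c := rfl
@[simp] lemma vec4_0 (a b c d : M) : ![a, b, c, d] 0 = a := rfl
@[simp] lemma vec4_1 (a b c d : M) : ![a, b, c, d] 1 = b := rfl
@[simp] lemma vec4_2 (a b c d : M) : ![a, b, c, d] 2 = c := rfl
@[simp] lemma vec4_3 (a b c d : M) : ![a, b, c, d] 3 = d := rfl

lemma snoc2 (a b c : M) : (Fin.snoc ![a, b] c : Fin 3 → M) = ![a, b, c] := by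
  funext i
  fin_cases i <;> (simp [Fin.snoc]; try rfl)

lemma snoc1 (a b : M) : (Fin.snoc ![a] b : Fin 2 → M) = ![a, b] := by
  funext i
  fin_cases i <;> (simp [Fin.snoc]; try rfl)

lemma snoc3 (a b c d : M) : (Fin.snoc ![a, b, c] d : Fin 4 → M) = ![a, b, c, d] := by
  funext i
  fin_cases i <;> (simp [Fin.snoc]; try rfl)

lemma comp_vec1 {n : ℕ} (v : Fin n → M) (i : Fin n) : v ∘ ![i] = ![v i] := by
  funext k
  fin_cases k <;> rfl

lemma comp_vec2 {n : ℕ} (v : Fin n → M) (i j : Fin n) : v ∘ ![i, j] = ![v i, v j] := by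
  funext k
  fin_cases k <;> rfl

end VecHelpers

namespace Ctx

variable {L : FirstOrder.Language.{u, v}} {M : Type w} [L.Structure M] (Γ : Ctx L M)

-- ===== p is a filter =====

lemma top_mem_p : (⊤ : L.Formula (↥(∅ : Set M) ⊕ Fin 1)) ∈ Γ.p := by
  rw [Γ.mem_p_iff]
  convert Set.finite_empty
  rw [Set.eq_empty_iff_forall_notMem]
  rintro c ⟨_, h⟩
  exact h (by simp [Formula.realize_top])

lemma inf_mem_p {φ ψ : L.Formula (↥(∅ : Set M) ⊕ Fin 1)} (hφ : φ ∈ Γ.p) (hψ : ψ ∈ Γ.p) :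
    φ ⊓ ψ ∈ Γ.p := by
  rw [Γ.mem_p_iff]
  refine Set.Finite.subset ((Γ.cofin_of_mem_p hφ).union (Γ.cofin_of_mem_p hψ)) ?_
  rintro c ⟨hc, hreal⟩
  rw [Formula.realize_inf] at hreal
  by_cases h1 : φ.Realize (pval ![c])
  · exact Or.inr ⟨hc, fun h2 => hreal ⟨h1, h2⟩⟩
  · exact Or.inl ⟨hc, h1⟩

/-- finite conjunction -/
noncomputable def bigAnd (t : Finset (L.Formula (↥(∅ : Set M) ⊕ Fin 1))) :
    L.Formula (↥(∅ : Set M) ⊕ Fin 1) :=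
  t.toList.foldr (· ⊓ ·) ⊤

lemma realize_bigAnd (t : Finset (L.Formula (↥(∅ : Set M) ⊕ Fin 1))) (a : M) :
    (bigAnd t).Realize (pval ![a]) ↔ ∀ φ ∈ t, φ.Realize (pval ![a]) := by
  rw [bigAnd]
  have h : ∀ l : List (L.Formula (↥(∅ : Set M) ⊕ Fin 1)),
      (l.foldr (· ⊓ ·) ⊤).Realize (pval ![a]) ↔ ∀ φ ∈ l, φ.Realize (pval ![a]) := by
    intro l
    induction l with
    | nil => simp [Formula.realize_top]
    | cons φ l ih => simp [Formula.realize_inf, ih]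
  rw [h]
  simp

lemma bigAnd_mem_p {t : Finset (L.Formula (↥(∅ : Set M) ⊕ Fin 1))}
    (h : ∀ φ ∈ t, φ ∈ Γ.p) : bigAnd t ∈ Γ.p := by
  rw [bigAnd]
  have h' : ∀ φ ∈ t.toList, φ ∈ Γ.p := fun φ hφ => h φ (Finset.mem_toList.mp hφ)
  revert h'
  generalize t.toList = l
  intro h'
  induction l with
  | nil => exact Γ.top_mem_p
  | cons φ l ih =>
    exact Γ.inf_mem_p (h' φ List.mem_cons_self)
      (ih fun ψ hψ => h' ψ (List.mem_cons_of_mem _ hψ))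

-- ===== order formulas =====

/-- guarded order formula: realizes iff `Γ.r a b` -/
def ltF : L.Formula (↥(∅ : Set M) ⊕ Fin 2) :=
  prj ![0] Γ.δ ⊓ prj ![1] Γ.δ ⊓ Γ.lt

lemma realize_ltF (a b : M) : Γ.ltF.Realize (pval ![a, b]) ↔ Γ.r a b := by
  rw [ltF, Formula.realize_inf, Formula.realize_inf, realize_prj, realize_prj,
    comp_vec1, comp_vec1]
  unfold Ctx.r gRel defSet defRel
  simp only [vec2_0, vec2_1, Set.mem_setOf_eq]
  tauto

/-- immediate successor in D -/
def IsSucc (a b : M) : Prop := Γ.r a b ∧ ∀ z : M, ¬(Γ.r a z ∧ Γ.r z b)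

noncomputable def succF : L.Formula (↥(∅ : Set M) ⊕ Fin 2) :=
  Γ.ltF ⊓ allQ (Formula.not (prj ![0, 2] Γ.ltF ⊓ prj ![2, 1] Γ.ltF))

lemma realize_succF (a b : M) : Γ.succF.Realize (pval ![a, b]) ↔ Γ.IsSucc a b := by
  rw [succF, Formula.realize_inf, realize_ltF, IsSucc, realize_allQ]
  refine and_congr_right fun _ => ?_
  refine forall_congr' fun z => ?_
  rw [snoc2, Formula.realize_not, Formula.realize_inf, realize_prj, realize_prj,
    comp_vec2, comp_vec2]
  simp only [vec3_0, vec3_1, vec3_2]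
  rw [realize_ltF, realize_ltF]

lemma isSucc_unique {a b b' : M} (h : Γ.IsSucc a b) (h' : Γ.IsSucc a b') : b = b' := by
  rcases Γ.r_trichot (Γ.r_right h.1) (Γ.r_right h'.1) with heq | h1 | h1
  · exact heq
  · exact absurd ⟨h.1, h1⟩ (h'.2 b)
  · exact absurd ⟨h'.1, h1⟩ (h.2 b')

lemma isSucc_en (n : ℕ) : Γ.IsSucc (Γ.en n) (Γ.en (n + 1)) := by
  refine ⟨Γ.en_r (Nat.lt_succ_self n), fun z ⟨h1, h2⟩ => ?_⟩
  have hzC : z ∈ Γ.C := Γ.C_initial (Γ.en_mem (n + 1)) (Γ.r_right h1) h2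
  have p1 := Γ.pos_strictMono (Γ.en_mem n) hzC h1
  have p2 := Γ.pos_strictMono hzC (Γ.en_mem (n + 1)) h2
  rw [Γ.en_pos] at p1
  rw [Γ.en_pos] at p2
  omega

/-- anything in D that is not in C lies above all of C -/
lemma D_dichot {d : M} (hd : d ∈ Γ.Ds) (hnc : d ∉ Γ.C) : ∀ c ∈ Γ.C, Γ.r c d := by
  intro c hc
  rcases Γ.r_trichot (Γ.C_sub_D hc) hd with rfl | h1 | h1
  · exact absurd hc hnc
  · exact h1
  · exact absurd (Γ.C_initial hc hd h1) hnc

-- ===== successor chains =====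

def chainRel : ℕ → M → M → Prop
  | 0, a, b => a = b
  | (k + 1), a, b => ∃ z, Γ.IsSucc a z ∧ chainRel k z b

noncomputable def chainF : ℕ → L.Formula (↥(∅ : Set M) ⊕ Fin 2)
  | 0 => eqF 0 1
  | (k + 1) => exQ (prj ![0, 2] Γ.succF ⊓ prj ![2, 1] (chainF k))

lemma realize_chainF (k : ℕ) (a b : M) :
    (Γ.chainF k).Realize (pval ![a, b]) ↔ Γ.chainRel k a b := by
  induction k generalizing a b with
  | zero =>
    simp only [chainF, chainRel]
    rw [realize_eqF]
    simp
  | succ k ih =>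
    simp only [chainF, chainRel]
    rw [realize_exQ]
    constructor
    · rintro ⟨z, hz⟩
      rw [snoc2, Formula.realize_inf, realize_prj, realize_prj, comp_vec2, comp_vec2] at hz
      simp only [vec3_0, vec3_1, vec3_2] at hz
      rw [realize_succF, ih] at hz
      exact ⟨z, hz.1, hz.2⟩
    · rintro ⟨z, h1, h2⟩
      refine ⟨z, ?_⟩
      rw [snoc2, Formula.realize_inf, realize_prj, realize_prj, comp_vec2, comp_vec2]
      simp only [vec3_0, vec3_1, vec3_2]
      rw [realize_succF, ih]
      exact ⟨h1, h2⟩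

lemma chainRel_en {m k : ℕ} : Γ.chainRel k (Γ.en m) (Γ.en (m + k)) := by
  induction k generalizing m with
  | zero => rfl
  | succ k ih =>
    refine ⟨Γ.en (m + 1), Γ.isSucc_en m, ?_⟩
    rw [show m + (k + 1) = (m + 1) + k by omega]
    exact ih

lemma chainRel_unique {k : ℕ} {a b b' : M} (h : Γ.chainRel k a b) (h' : Γ.chainRel k a b') :
    b = b' := by
  induction k generalizing a with
  | zero => exact h.symm.trans h'
  | succ k ih =>
    obtain ⟨z, hz1, hz2⟩ := h
    obtain ⟨z', hz1', hz2'⟩ := h'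
    rw [Γ.isSucc_unique hz1 hz1'] at hz2
    exact ih hz2 hz2'

end Ctx
-- ===== definable closure and C-P facts =====

noncomputable def dclF {d : M} (hd : d ∈ dclSet L (∅ : Set M)) :
    L.Formula (↥(∅ : Set M) ⊕ Fin 1) := hd.choose

lemma dclF_realize {d : M} (hd : d ∈ dclSet L (∅ : Set M)) :
    (dclF hd).Realize (pval ![d]) := hd.choose_spec.1

lemma dclF_unique {d : M} (hd : d ∈ dclSet L (∅ : Set M)) {b : M}
    (h : (dclF hd).Realize (pval ![b])) : b = d := hd.choose_spec.2 b h

namespace Ctx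

variable {L : FirstOrder.Language.{u, v}} {M : Type w} [L.Structure M] (Γ : Ctx L M)

lemma C_dcl {c : M} (hc : c ∈ Γ.C) : c ∈ dclSet L (∅ : Set M) := Γ.hp.2.2.1 hc

lemma mem_p_tail {φ : L.Formula (↥(∅ : Set M) ⊕ Fin 1)} :
    φ ∈ Γ.p ↔ ∃ N : ℕ, ∀ c ∈ Γ.C, N ≤ Γ.pos c → φ.Realize (pval ![c]) := by
  rw [Γ.mem_p_iff]
  exact Γ.cofinite_iff_tail {x | φ.Realize (pval ![x])}

/-- the formula "ψ holds of some z with z < x" -/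
noncomputable def gtF (ψ : L.Formula (↥(∅ : Set M) ⊕ Fin 1)) :
    L.Formula (↥(∅ : Set M) ⊕ Fin 1) :=
  exQ (prj ![1] ψ ⊓ prj ![1, 0] Γ.ltF)

lemma realize_gtF (ψ : L.Formula (↥(∅ : Set M) ⊕ Fin 1)) (a : M) :
    (Γ.gtF ψ).Realize (pval ![a]) ↔ ∃ b : M, ψ.Realize (pval ![b]) ∧ Γ.r b a := by
  rw [gtF, realize_exQ]
  refine exists_congr fun b => ?_
  rw [snoc1, Formula.realize_inf, realize_prj, realize_prj, comp_vec1, comp_vec2]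
  simp only [vec2_0, vec2_1]
  rw [realize_ltF]

lemma r_C_P {c a : M} (hc : c ∈ Γ.C) (ha : a ∈ Γ.Ps) : Γ.r c a := by
  have hmem : Γ.gtF (dclF (Γ.C_dcl hc)) ∈ Γ.p := by
    rw [Γ.mem_p_tail]
    refine ⟨Γ.pos c + 1, fun c' hc' hpos => ?_⟩
    rw [Γ.realize_gtF]
    exact ⟨c, dclF_realize _, (Γ.r_iff_pos_lt hc hc').mpr (by omega)⟩
  obtain ⟨b, hb1, hb2⟩ := (Γ.realize_gtF _ a).mp (Γ.realizes_of_mem_P ha hmem)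
  rwa [dclF_unique (Γ.C_dcl hc) hb1] at hb2

lemma P_not_C {a : M} (ha : a ∈ Γ.Ps) : a ∉ Γ.C :=
  fun hc => Γ.r_irrefl (Γ.C_sub_D hc) (Γ.r_C_P hc ha)

lemma P_nonempty : Γ.Ps.Nonempty := Γ.hsat ∅ Set.countable_empty Γ.p Γ.hp.1.1

-- ===== the successor function on P =====

lemma hasSF_mem : exQ Γ.succF ∈ Γ.p := by
  rw [Γ.mem_p_tail]
  refine ⟨0, fun c hc _ => ?_⟩
  rw [realize_exQ]
  refine ⟨Γ.en (Γ.pos c + 1), ?_⟩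
  rw [snoc1, realize_succF]
  have := Γ.isSucc_en (Γ.pos c)
  rwa [Γ.en_pos_eq hc] at this

lemma sfwd_mem {φ : L.Formula (↥(∅ : Set M) ⊕ Fin 1)} (hφ : φ ∈ Γ.p) :
    allQ (Γ.succF ⟹ prj ![1] φ) ∈ Γ.p := by
  obtain ⟨N, hN⟩ := Γ.mem_p_tail.mp hφ
  rw [Γ.mem_p_tail]
  refine ⟨N, fun c hc hpos => ?_⟩
  rw [realize_allQ]
  intro b
  rw [snoc1, Formula.realize_imp, realize_succF, realize_prj, comp_vec1]
  simp only [vec2_1]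
  intro hsucc
  have hb : b = Γ.en (Γ.pos c + 1) := by
    have := Γ.isSucc_en (Γ.pos c)
    rw [Γ.en_pos_eq hc] at this
    exact Γ.isSucc_unique hsucc this
  rw [hb]
  exact hN _ (Γ.en_mem _) (by rw [Γ.en_pos]; omega)

lemma isSucc_S {a : M} (ha : a ∈ Γ.Ps) : Γ.IsSucc a (Γ.S a) ∧ Γ.S a ∈ Γ.Ps := by
  obtain ⟨b, hb⟩ := (realize_exQ _ _).mp (Γ.realizes_of_mem_P ha Γ.hasSF_mem)
  rw [snoc1, realize_succF] at hb
  have hbP : b ∈ Γ.Ps := by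
    intro φ hφ
    have := Γ.realizes_of_mem_P ha (Γ.sfwd_mem hφ)
    rw [realize_allQ] at this
    have h2 := this b
    rw [snoc1, Formula.realize_imp, realize_succF, realize_prj, comp_vec1] at h2
    simpa using h2 hb
  obtain ⟨haP, hSaP, hrS, hmin⟩ := Γ.hS a ha
  rcases hmin b hbP hb.1 with rfl | hlt
  · exact ⟨hb, hbP⟩
  · exact absurd ⟨hrS, hlt⟩ (hb.2 (Γ.S a))

lemma S_iter_mem {a : M} (ha : a ∈ Γ.Ps) (k : ℕ) :
    Γ.S^[k] a ∈ Γ.Ps ∧ Γ.chainRel k a (Γ.S^[k] a) := by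
  induction k generalizing a with
  | zero => exact ⟨ha, rfl⟩
  | succ k ih =>
    obtain ⟨hsucc, hSP⟩ := Γ.isSucc_S ha
    obtain ⟨h1, h2⟩ := ih hSP
    rw [Function.iterate_succ_apply]
    exact ⟨h1, ⟨Γ.S a, hsucc, h2⟩⟩

lemma chainRel_S {k : ℕ} {a b : M} (h : Γ.chainRel k a b) (ha : a ∈ Γ.Ps) :
    b = Γ.S^[k] a := by
  induction k generalizing a with
  | zero => exact h.symm
  | succ k ih =>
    obtain ⟨z, hz, hch⟩ := h
    obtain ⟨hsucc, hSP⟩ := Γ.isSucc_S ha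
    rw [Γ.isSucc_unique hz hsucc] at hch
    rw [Function.iterate_succ_apply]
    exact ih hch hSP

end Ctx
-- ===== parameter formulas and the compactness construction =====

section ParamFormulas

variable {L : FirstOrder.Language.{u, v}} {M : Type w} [L.Structure M]

def emb0 {n : ℕ} (A' : Set M) : (↥(∅ : Set M) ⊕ Fin n) → (↥A' ⊕ Fin n)
  | Sum.inl e => (Set.notMem_empty e.1 e.2).elim
  | Sum.inr i => Sum.inr i

lemma realize_emb0 {n : ℕ} (A' : Set M) (φ : L.Formula (↥(∅ : Set M) ⊕ Fin n))
    (v : Fin n → M) :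
    (φ.relabel (emb0 A')).Realize (pval v) ↔ φ.Realize (pval v) := by
  rw [Formula.realize_relabel]
  have h : (pval v : ↥A' ⊕ Fin n → M) ∘ emb0 A' = (pval v : ↥(∅ : Set M) ⊕ Fin n → M) := by
    funext x
    rcases x with ⟨e, he⟩ | i
    · exact absurd he (Set.notMem_empty e)
    · rfl
  rw [h]

noncomputable def paramTheta (θf : L.Formula (↥(∅ : Set M) ⊕ Fin 2)) (A' : Set M)
    (a₀ : M) (ha : a₀ ∈ A') : L.Formula (↥A' ⊕ Fin 1) :=
  θf.relabel (fun x => match x with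
    | Sum.inl e => (Set.notMem_empty e.1 e.2).elim
    | Sum.inr i => if i = 0 then Sum.inl ⟨a₀, ha⟩ else Sum.inr 0)

lemma realize_paramTheta (θf : L.Formula (↥(∅ : Set M) ⊕ Fin 2)) (A' : Set M)
    (a₀ : M) (ha : a₀ ∈ A') (y : M) :
    (paramTheta θf A' a₀ ha).Realize (pval ![y]) ↔ θf.Realize (pval ![a₀, y]) := by
  rw [paramTheta, Formula.realize_relabel]
  have h : ((pval ![y] : ↥A' ⊕ Fin 1 → M) ∘ fun x => match x with
    | Sum.inl e => (Set.notMem_empty e.1 e.2).elim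
    | Sum.inr i => if i = 0 then Sum.inl ⟨a₀, ha⟩ else Sum.inr 0)
      = (pval ![a₀, y] : ↥(∅ : Set M) ⊕ Fin 2 → M) := by
    funext x
    rcases x with ⟨e, he⟩ | i
    · exact absurd he (Set.notMem_empty e)
    · fin_cases i <;> rfl
  rw [h]

noncomputable def paramNeq (A' : Set M) (b₀ : M) (hb : b₀ ∈ A') :
    L.Formula (↥A' ⊕ Fin 1) :=
  Formula.not (Term.equal (Term.var (Sum.inr 0)) (Term.var (Sum.inl ⟨b₀, hb⟩)))

lemma realize_paramNeq (A' : Set M) (b₀ : M) (hb : b₀ ∈ A') (y : M) :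
    (paramNeq (L := L) A' b₀ hb).Realize (pval ![y]) ↔ y ≠ b₀ := by
  rw [paramNeq, Formula.realize_not, Formula.realize_equal]
  simp [pval]

end ParamFormulas

namespace Ctx

variable {L : FirstOrder.Language.{u, v}} {M : Type w} [L.Structure M] (Γ : Ctx L M)

lemma exists_chi {a₀ : M} (ha₀ : a₀ ∈ Γ.Ps) :
    ∃ χ : L.Formula (↥(∅ : Set M) ⊕ Fin 1), χ ∈ Γ.p ∧
      ∀ y : M, defRel (∅ : Set M) Γ.θf a₀ y → χ.Realize (pval ![y]) → y = Γ.fn a₀ := by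
  classical
  set b₀ := Γ.fn a₀ with hb₀
  set A' : Set M := {a₀, b₀} with hA'
  have haA : a₀ ∈ A' := Set.mem_insert _ _
  have hbA : b₀ ∈ A' := Set.mem_insert_of_mem _ rfl
  set θa : L.Formula (↥A' ⊕ Fin 1) := paramTheta Γ.θf A' a₀ haA with hθa
  set nq : L.Formula (↥A' ⊕ Fin 1) := paramNeq A' b₀ hbA with hnq
  set q : Set (L.Formula (↥A' ⊕ Fin 1)) :=
    ((fun φ => φ.relabel (emb0 A')) '' Γ.p) ∪ {θa, nq} with hq
  -- q is unrealized
  have hunreal : ¬(typeSet A' q).Nonempty := by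
    rintro ⟨y, hy⟩
    have hyP : y ∈ Γ.Ps := by
      intro φ hφ
      have := hy _ (Or.inl ⟨φ, hφ, rfl⟩)
      rwa [realize_emb0] at this
    have hyθ : Γ.θf.Realize (pval ![a₀, y]) := by
      have := hy θa (Or.inr (Set.mem_insert _ _))
      rwa [hθa, realize_paramTheta] at this
    have hyne : y ≠ b₀ := by
      have := hy nq (Or.inr (Set.mem_insert_of_mem _ rfl))
      rwa [hnq, realize_paramNeq] at this
    exact hyne ((Γ.hgraph a₀ y).mp ⟨ha₀, hyP, hyθ⟩).2.symm
  -- hence q is not finitely satisfiable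
  have hnfs : ¬FinSat A' q := fun hfs =>
    hunreal (Γ.hsat A' (((Set.finite_singleton b₀).insert a₀).countable) q hfs)
  rw [FinSat] at hnfs
  push_neg at hnfs
  obtain ⟨s, hsq, hsuns⟩ := hnfs
  -- pull back the p-part of s
  set g : L.Formula (↥A' ⊕ Fin 1) → L.Formula (↥(∅ : Set M) ⊕ Fin 1) := fun ψ =>
    if h : ∃ φ ∈ Γ.p, φ.relabel (emb0 A') = ψ then h.choose else ⊤ with hg
  have hgp : ∀ ψ, g ψ ∈ Γ.p := by
    intro ψ
    simp only [hg]
    split_ifs with h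
    · exact h.choose_spec.1
    · exact Γ.top_mem_p
  refine ⟨bigAnd (s.image g), Γ.bigAnd_mem_p (fun φ hφ => ?_), ?_⟩
  · obtain ⟨ψ, _, rfl⟩ := Finset.mem_image.mp hφ
    exact hgp ψ
  · intro y hθ hχ
    by_contra hne
    obtain ⟨ψ, hψ, hnre⟩ := hsuns ![y]
    apply hnre
    rcases hsq hψ with ⟨φ, hφp, rfl⟩ | hmem
    · have hex : ∃ φ' ∈ Γ.p, φ'.relabel (emb0 A') = φ.relabel (emb0 A') := ⟨φ, hφp, rfl⟩
      have hmem2 : g (φ.relabel (emb0 A')) ∈ Finset.image g s := Finset.mem_image_of_mem g hψ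
      have hre := (realize_bigAnd _ y).mp hχ _ hmem2
      simp only [hg] at hre
      rw [dif_pos hex] at hre
      show (Formula.relabel (emb0 A') φ).Realize (pval ![y])
      rw [← hex.choose_spec.2, realize_emb0]
      exact hre
    · rcases hmem with rfl | rfl
      · rw [hθa, realize_paramTheta]
        exact hθ
      · rw [hnq, realize_paramNeq]
        exact hne

end Ctx
-- ===== the graph relation R guarded by χ =====

namespace Ctx

variable {L : FirstOrder.Language.{u, v}} {M : Type w} [L.Structure M] (Γ : Ctx L M)

/-- semantic guarded graph relation -/
def Rr (χ : L.Formula (↥(∅ : Set M) ⊕ Fin 1)) (a b : M) : Prop :=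
  Γ.θf.Realize (pval ![a, b]) ∧ (χ.Realize (pval ![a]) ∧ a ∈ Γ.Ds) ∧
    (χ.Realize (pval ![b]) ∧ b ∈ Γ.Ds)

noncomputable def RF (χ : L.Formula (↥(∅ : Set M) ⊕ Fin 1)) :
    L.Formula (↥(∅ : Set M) ⊕ Fin 2) :=
  Γ.θf ⊓ prj ![0] (χ ⊓ Γ.δ) ⊓ prj ![1] (χ ⊓ Γ.δ)

lemma realize_RF (χ : L.Formula (↥(∅ : Set M) ⊕ Fin 1)) (a b : M) :
    (Γ.RF χ).Realize (pval ![a, b]) ↔ Γ.Rr χ a b := by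
  rw [RF, Formula.realize_inf, Formula.realize_inf, realize_prj, realize_prj,
    comp_vec1, comp_vec1]
  simp only [vec2_0, vec2_1, Formula.realize_inf]
  unfold Rr Ctx.Ds defSet
  simp only [Set.mem_setOf_eq]
  tauto

/-- existence of an R-image -/
noncomputable def exR (χ : L.Formula (↥(∅ : Set M) ⊕ Fin 1)) :
    L.Formula (↥(∅ : Set M) ⊕ Fin 1) := exQ (Γ.RF χ)

lemma realize_exR (χ : L.Formula (↥(∅ : Set M) ⊕ Fin 1)) (a : M) :
    (Γ.exR χ).Realize (pval ![a]) ↔ ∃ b : M, Γ.Rr χ a b := by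
  rw [exR, realize_exQ]
  refine exists_congr fun b => ?_
  rw [snoc1, realize_RF]

/-- uniqueness of the R-image -/
noncomputable def uniqF (χ : L.Formula (↥(∅ : Set M) ⊕ Fin 1)) :
    L.Formula (↥(∅ : Set M) ⊕ Fin 1) :=
  allQ (allQ ((prj ![0, 1] (Γ.RF χ)) ⟹ ((prj ![0, 2] (Γ.RF χ)) ⟹ eqF 1 2)))

lemma realize_uniqF (χ : L.Formula (↥(∅ : Set M) ⊕ Fin 1)) (a : M) :
    (Γ.uniqF χ).Realize (pval ![a]) ↔
      ∀ y z : M, Γ.Rr χ a y → Γ.Rr χ a z → y = z := by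
  rw [uniqF, realize_allQ]
  refine forall_congr' fun y => ?_
  rw [snoc1, realize_allQ]
  refine forall_congr' fun z => ?_
  rw [snoc2, Formula.realize_imp, Formula.realize_imp, realize_prj, realize_prj,
    realize_eqF, comp_vec2, comp_vec2]
  simp only [vec3_0, vec3_1, vec3_2]
  rw [realize_RF, realize_RF]

/-- "every R-image satisfies ψ(x,·)" -/
noncomputable def post (χ : L.Formula (↥(∅ : Set M) ⊕ Fin 1))
    (ψ : L.Formula (↥(∅ : Set M) ⊕ Fin 2)) : L.Formula (↥(∅ : Set M) ⊕ Fin 1) :=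
  allQ ((Γ.RF χ) ⟹ ψ)

lemma realize_post (χ : L.Formula (↥(∅ : Set M) ⊕ Fin 1))
    (ψ : L.Formula (↥(∅ : Set M) ⊕ Fin 2)) (a : M) :
    (Γ.post χ ψ).Realize (pval ![a]) ↔
      ∀ b : M, Γ.Rr χ a b → ψ.Realize (pval ![a, b]) := by
  rw [post, realize_allQ]
  refine forall_congr' fun b => ?_
  rw [snoc1, Formula.realize_imp, realize_RF]

/-- "for the D-successor z of x, images y of x and y' of z satisfy ψ(y,y')" -/
noncomputable def step (χ : L.Formula (↥(∅ : Set M) ⊕ Fin 1))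
    (ψ : L.Formula (↥(∅ : Set M) ⊕ Fin 2)) : L.Formula (↥(∅ : Set M) ⊕ Fin 1) :=
  allQ (allQ (allQ ((prj ![0, 1] Γ.succF) ⟹ ((prj ![0, 2] (Γ.RF χ)) ⟹
    ((prj ![1, 3] (Γ.RF χ)) ⟹ prj ![2, 3] ψ)))))

lemma realize_step (χ : L.Formula (↥(∅ : Set M) ⊕ Fin 1))
    (ψ : L.Formula (↥(∅ : Set M) ⊕ Fin 2)) (a : M) :
    (Γ.step χ ψ).Realize (pval ![a]) ↔
      ∀ z y y' : M, Γ.IsSucc a z → Γ.Rr χ a y → Γ.Rr χ z y' →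
        ψ.Realize (pval ![y, y']) := by
  rw [step, realize_allQ]
  refine forall_congr' fun z => ?_
  rw [snoc1, realize_allQ]
  refine forall_congr' fun y => ?_
  rw [snoc2, realize_allQ]
  refine forall_congr' fun y' => ?_
  rw [snoc3, Formula.realize_imp, Formula.realize_imp, Formula.realize_imp,
    realize_prj, realize_prj, realize_prj, realize_prj,
    comp_vec2, comp_vec2, comp_vec2, comp_vec2]
  simp only [vec4_0, vec4_1, vec4_2, vec4_3]
  rw [realize_succF, realize_RF, realize_RF]

end Ctx
-- ===== consequences of the compactness witness χ =====

namespace Ctx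

variable {L : FirstOrder.Language.{u, v}} {M : Type w} [L.Structure M] (Γ : Ctx L M)

lemma theta_fn {a : M} (ha : a ∈ Γ.Ps) : Γ.θf.Realize (pval ![a, Γ.fn a]) :=
  ((Γ.hgraph a (Γ.fn a)).mpr ⟨ha, rfl⟩).2.2

lemma not_mem_p_tail {φ : L.Formula (↥(∅ : Set M) ⊕ Fin 1)} (h : φ ∉ Γ.p) :
    ∃ N : ℕ, ∀ c ∈ Γ.C, N ≤ Γ.pos c → ¬φ.Realize (pval ![c]) := by
  rcases Γ.hp.1.2 φ with hφ | hφ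
  · exact absurd hφ h
  · obtain ⟨N, hN⟩ := Γ.mem_p_tail.mp hφ
    exact ⟨N, fun c hc hpos => by
      have := hN c hc hpos
      rwa [Formula.realize_not] at this⟩

lemma mem_p_of_unbounded {φ : L.Formula (↥(∅ : Set M) ⊕ Fin 1)}
    (h : ∀ N : ℕ, ∃ c ∈ Γ.C, N ≤ Γ.pos c ∧ φ.Realize (pval ![c])) : φ ∈ Γ.p := by
  by_contra hn
  obtain ⟨N, hN⟩ := Γ.not_mem_p_tail hn
  obtain ⟨c, hc, hpos, hre⟩ := h N
  exact hN c hc hpos hre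

section Chi

variable {χ : L.Formula (↥(∅ : Set M) ⊕ Fin 1)} {a₀ : M}

lemma Rr_fn (hχ : χ ∈ Γ.p) {a : M} (ha : a ∈ Γ.Ps) : Γ.Rr χ a (Γ.fn a) := by
  have hfa : Γ.fn a ∈ Γ.Ps := Γ.hfmap a ha
  exact ⟨Γ.theta_fn ha, ⟨Γ.realizes_of_mem_P ha hχ, Γ.P_sub_D ha⟩,
    ⟨Γ.realizes_of_mem_P hfa hχ, Γ.P_sub_D hfa⟩⟩

lemma exR_mem (hχ : χ ∈ Γ.p) (ha₀ : a₀ ∈ Γ.Ps) : Γ.exR χ ∈ Γ.p :=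
  Γ.mem_p_of_mem_P ha₀ ((Γ.realize_exR χ a₀).mpr ⟨Γ.fn a₀, Γ.Rr_fn hχ ha₀⟩)

lemma uniq_mem (ha₀ : a₀ ∈ Γ.Ps)
    (hu : ∀ y : M, defRel (∅ : Set M) Γ.θf a₀ y → χ.Realize (pval ![y]) → y = Γ.fn a₀) :
    Γ.uniqF χ ∈ Γ.p := by
  refine Γ.mem_p_of_mem_P ha₀ ((Γ.realize_uniqF χ a₀).mpr fun y z h1 h2 => ?_)
  rw [hu y h1.1 h1.2.2.1, hu z h2.1 h2.2.2.1]

lemma Rr_unique (hχ : χ ∈ Γ.p) (ha₀ : a₀ ∈ Γ.Ps)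
    (hu : ∀ y : M, defRel (∅ : Set M) Γ.θf a₀ y → χ.Realize (pval ![y]) → y = Γ.fn a₀)
    {a y : M} (ha : a ∈ Γ.Ps) (h : Γ.Rr χ a y) : y = Γ.fn a := by
  have hm := Γ.uniq_mem ha₀ hu
  exact (Γ.realize_uniqF χ a).mp (Γ.realizes_of_mem_P ha hm) y (Γ.fn a) h (Γ.Rr_fn hχ ha)

lemma post_mem (hχ : χ ∈ Γ.p) (ha₀ : a₀ ∈ Γ.Ps)
    (hu : ∀ y : M, defRel (∅ : Set M) Γ.θf a₀ y → χ.Realize (pval ![y]) → y = Γ.fn a₀)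
    {ψ : L.Formula (↥(∅ : Set M) ⊕ Fin 2)} (hψ : ψ.Realize (pval ![a₀, Γ.fn a₀])) :
    Γ.post χ ψ ∈ Γ.p := by
  refine Γ.mem_p_of_mem_P ha₀ ((Γ.realize_post χ ψ a₀).mpr fun b hb => ?_)
  rwa [Γ.Rr_unique hχ ha₀ hu ha₀ hb]

lemma post_fn {ψ : L.Formula (↥(∅ : Set M) ⊕ Fin 2)} (hχ : χ ∈ Γ.p)
    (hmem : Γ.post χ ψ ∈ Γ.p) {a : M} (ha : a ∈ Γ.Ps) :
    ψ.Realize (pval ![a, Γ.fn a]) :=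
  (Γ.realize_post χ ψ a).mp (Γ.realizes_of_mem_P ha hmem) (Γ.fn a) (Γ.Rr_fn hχ ha)

end Chi

-- ===== the Y function and honesty =====

noncomputable def Yc (χ : L.Formula (↥(∅ : Set M) ⊕ Fin 1)) (c : M) : M :=
  @dite M (∃ b, Γ.Rr χ c b) (Classical.dec _) (fun h => h.choose) (fun _ => c)

lemma Yc_spec {χ : L.Formula (↥(∅ : Set M) ⊕ Fin 1)} {c : M} (h : ∃ b, Γ.Rr χ c b) :
    Γ.Rr χ c (Γ.Yc χ c) := by
  have heq : Γ.Yc χ c = h.choose := dif_pos h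
  rw [heq]
  exact h.choose_spec

noncomputable def goodF (χ : L.Formula (↥(∅ : Set M) ⊕ Fin 1)) :
    L.Formula (↥(∅ : Set M) ⊕ Fin 1) := χ ⊓ (Γ.exR χ ⊓ Γ.uniqF χ)

lemma goodF_mem {χ : L.Formula (↥(∅ : Set M) ⊕ Fin 1)} {a₀ : M} (hχ : χ ∈ Γ.p)
    (ha₀ : a₀ ∈ Γ.Ps)
    (hu : ∀ y : M, defRel (∅ : Set M) Γ.θf a₀ y → χ.Realize (pval ![y]) → y = Γ.fn a₀) :
    Γ.goodF χ ∈ Γ.p :=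
  Γ.inf_mem_p hχ (Γ.inf_mem_p (Γ.exR_mem hχ ha₀) (Γ.uniq_mem ha₀ hu))

lemma good_Rr {χ : L.Formula (↥(∅ : Set M) ⊕ Fin 1)} {c : M}
    (h : (Γ.goodF χ).Realize (pval ![c])) : Γ.Rr χ c (Γ.Yc χ c) := by
  rw [goodF, Formula.realize_inf, Formula.realize_inf] at h
  exact Γ.Yc_spec ((Γ.realize_exR χ c).mp h.2.1)

lemma good_uniq {χ : L.Formula (↥(∅ : Set M) ⊕ Fin 1)} {c : M}
    (h : (Γ.goodF χ).Realize (pval ![c])) {y : M} (hy : Γ.Rr χ c y) : y = Γ.Yc χ c := by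
  rw [goodF, Formula.realize_inf, Formula.realize_inf] at h
  exact (Γ.realize_uniqF χ c).mp h.2.2 y (Γ.Yc χ c) hy (Γ.good_Rr (by
    rw [goodF, Formula.realize_inf, Formula.realize_inf]
    exact h))

/-- the image formula: y is the image of a good point strictly below it -/
noncomputable def imF (χ : L.Formula (↥(∅ : Set M) ⊕ Fin 1)) :
    L.Formula (↥(∅ : Set M) ⊕ Fin 1) :=
  exQ (prj ![1] (Γ.goodF χ) ⊓ (prj ![1, 0] (Γ.RF χ) ⊓ prj ![1, 0] Γ.ltF))

lemma realize_imF (χ : L.Formula (↥(∅ : Set M) ⊕ Fin 1)) (a : M) :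
    (Γ.imF χ).Realize (pval ![a]) ↔
      ∃ x : M, (Γ.goodF χ).Realize (pval ![x]) ∧ Γ.Rr χ x a ∧ Γ.r x a := by
  rw [imF, realize_exQ]
  refine exists_congr fun x => ?_
  rw [snoc1, Formula.realize_inf, Formula.realize_inf, realize_prj, realize_prj, realize_prj,
    comp_vec1, comp_vec2]
  simp only [vec2_0, vec2_1]
  rw [realize_RF, realize_ltF]

end Ctx
-- ===== arithmetic helpers =====

section NatHelpers

lemma nat_le_of_nonincr {g : ℕ → ℕ} {N : ℕ} (h : ∀ n ≥ N, g (n + 1) ≤ g n) :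
    ∀ n ≥ N, g n ≤ g N := by
  have haux : ∀ m : ℕ, g (N + m) ≤ g N := by
    intro m
    induction m with
    | zero => exact (congrArg g (by omega : N = N + 0)).le
    | succ m ih =>
      have h2 := h (N + m) (by omega)
      have h3 : N + (m + 1) = (N + m) + 1 := by omega
      rw [h3]
      omega
  intro n hn
  have h4 : n = N + (n - N) := by omega
  rw [h4]
  exact haux _

lemma nat_stabilize_aux : ∀ v : ℕ, ∀ g : ℕ → ℕ, ∀ N : ℕ, g N = v →
    (∀ n ≥ N, g (n + 1) ≤ g n) → ∃ n₁ ≥ N, ∀ n ≥ n₁, g n = g n₁ := by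
  intro v
  induction v using Nat.strong_induction_on with
  | _ v ih =>
    intro g N hv h
    by_cases hc : ∃ n ≥ N, g n < g N
    · obtain ⟨n, hn, hlt⟩ := hc
      obtain ⟨n₁, hn₁, hconst⟩ := ih (g n) (by omega) g n rfl
        (fun m hm => h m (by omega))
      exact ⟨n₁, by omega, hconst⟩
    · push_neg at hc
      refine ⟨N, le_refl N, fun n hn => ?_⟩
      exact le_antisymm (nat_le_of_nonincr h n hn) (hc n hn)

lemma nat_stabilize {g : ℕ → ℕ} {N : ℕ} (h : ∀ n ≥ N, g (n + 1) ≤ g n) :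
    ∃ n₁ ≥ N, ∀ n ≥ n₁, g n = g n₁ :=
  nat_stabilize_aux (g N) g N rfl h

lemma nat_ge_of_strict {g : ℕ → ℕ} {N : ℕ} (h : ∀ n ≥ N, g n < g (n + 1)) :
    ∀ m : ℕ, g N + m ≤ g (N + m) := by
  intro m
  induction m with
  | zero => exact (congrArg g (by omega : N = N + 0)).le
  | succ m ih =>
    have := h (N + m) (by omega)
    have h2 : N + (m + 1) = (N + m) + 1 := by omega
    rw [h2]
    omega

lemma nat_pigeon {d : ℕ → ℕ} {N K : ℕ} (hb : ∀ n ≥ N, d n ≤ K) :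
    ∃ j ≤ K, ∀ N' : ℕ, ∃ n ≥ N', N ≤ n ∧ d n = j := by
  classical
  by_contra hcon
  push_neg at hcon
  choose Nf hNf using hcon
  set B := (Finset.range (K + 1)).sup (fun j => if h : j ≤ K then Nf j h else 0) with hB
  have hBge : ∀ j (hj : j ≤ K), Nf j hj ≤ B := by
    intro j hj
    have hle : (if h : j ≤ K then Nf j h else 0) ≤ B :=
      Finset.le_sup (f := fun j => if h : j ≤ K then Nf j h else 0)
        (Finset.mem_range.mpr (Nat.lt_succ_of_le hj))
    rwa [dif_pos hj] at hle
  set n := max N B with hn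
  have h1 : d n ≤ K := hb n (by omega)
  exact hNf (d n) h1 n (le_trans (hBge (d n) h1) (by omega)) (by omega) rfl

end NatHelpers
-- ===== the C-side analysis =====

namespace Ctx

variable {L : FirstOrder.Language.{u, v}} {M : Type w} [L.Structure M] (Γ : Ctx L M)

/-- the value of the relatively definable function on the n-th element of C -/
noncomputable def Vf (χ : L.Formula (↥(∅ : Set M) ⊕ Fin 1)) (n : ℕ) : M :=
  Γ.Yc χ (Γ.en n)

section Analysis

variable {χ : L.Formula (↥(∅ : Set M) ⊕ Fin 1)} {a₀ : M}

lemma good_tail (hχ : χ ∈ Γ.p) (ha₀ : a₀ ∈ Γ.Ps)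
    (hu : ∀ y : M, defRel (∅ : Set M) Γ.θf a₀ y → χ.Realize (pval ![y]) → y = Γ.fn a₀) :
    ∃ N : ℕ, ∀ n ≥ N, (Γ.goodF χ).Realize (pval ![Γ.en n]) := by
  obtain ⟨N, hN⟩ := Γ.mem_p_tail.mp (Γ.goodF_mem hχ ha₀ hu)
  exact ⟨N, fun n hn => hN _ (Γ.en_mem n) (by rw [Γ.en_pos]; exact hn)⟩

lemma Rr_V {n : ℕ} (hGn : (Γ.goodF χ).Realize (pval ![Γ.en n])) :
    Γ.Rr χ (Γ.en n) (Γ.Vf χ n) := Γ.good_Rr hGn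

lemma V_eq {n : ℕ} (hGn : (Γ.goodF χ).Realize (pval ![Γ.en n])) {y : M}
    (hy : Γ.Rr χ (Γ.en n) y) : y = Γ.Vf χ n := Γ.good_uniq hGn hy

lemma V_D {n : ℕ} (hGn : (Γ.goodF χ).Realize (pval ![Γ.en n])) :
    Γ.Vf χ n ∈ Γ.Ds := (Γ.Rr_V hGn).2.2.2

/-- if the function is eventually constant on C, contradiction -/
lemma const_bot (hχ : χ ∈ Γ.p) (ha₀ : a₀ ∈ Γ.Ps)
    (hu : ∀ y : M, defRel (∅ : Set M) Γ.θf a₀ y → χ.Realize (pval ![y]) → y = Γ.fn a₀)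
    {d : M} (hd : d ∈ Γ.C)
    (h : ∀ N : ℕ, ∃ n ≥ N, (Γ.goodF χ).Realize (pval ![Γ.en n]) ∧ Γ.Vf χ n = d) :
    False := by
  have hpost : Γ.post χ (prj ![1] (dclF (Γ.C_dcl hd))) ∈ Γ.p := by
    apply Γ.mem_p_of_unbounded
    intro N
    obtain ⟨n, hn, hGn, hVd⟩ := h N
    refine ⟨Γ.en n, Γ.en_mem n, by rw [Γ.en_pos]; exact hn, ?_⟩
    rw [Γ.realize_post]
    intro b hb
    rw [realize_prj, comp_vec1]
    simp only [vec2_1]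
    rw [Γ.V_eq hGn hb, hVd]
    exact dclF_realize _
  have hfin := Γ.post_fn hχ hpost ha₀
  rw [realize_prj, comp_vec1] at hfin
  simp only [vec2_1] at hfin
  have : Γ.fn a₀ = d := dclF_unique _ hfin
  exact Γ.P_not_C (Γ.hfmap a₀ ha₀) (this ▸ hd)

/-- the image formula belongs to p (positive sign case) -/
lemma imF_mem (hχ : χ ∈ Γ.p) (ha₀ : a₀ ∈ Γ.Ps)
    (hu : ∀ y : M, defRel (∅ : Set M) Γ.θf a₀ y → χ.Realize (pval ![y]) → y = Γ.fn a₀)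
    (hpos : Γ.r a₀ (Γ.fn a₀)) : Γ.imF χ ∈ Γ.p := by
  rcases Γ.hp.1.2 (Γ.imF χ) with h | h
  · exact h
  · exfalso
    have hre := Γ.realizes_of_mem_P (Γ.hfmap a₀ ha₀) h
    rw [Formula.realize_not, Γ.realize_imF] at hre
    exact hre ⟨a₀, Γ.realizes_of_mem_P ha₀ (Γ.goodF_mem hχ ha₀ hu), Γ.Rr_fn hχ ha₀, hpos⟩

/-- Λ: in the positive sign case, the function maps unboundedly many C-points into C -/
lemma lambda (hχ : χ ∈ Γ.p) (ha₀ : a₀ ∈ Γ.Ps)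
    (hu : ∀ y : M, defRel (∅ : Set M) Γ.θf a₀ y → χ.Realize (pval ![y]) → y = Γ.fn a₀)
    (hpos : Γ.r a₀ (Γ.fn a₀)) :
    ∀ N : ℕ, ∃ n ≥ N, (Γ.goodF χ).Realize (pval ![Γ.en n]) ∧ Γ.Vf χ n ∈ Γ.C := by
  classical
  obtain ⟨Ni, hNi⟩ := Γ.mem_p_tail.mp (Γ.imF_mem hχ ha₀ hu hpos)
  intro N
  -- a bound beyond the positions of the "small" values
  set B := (Finset.range N).sup (fun m => Γ.pos (Γ.Vf χ m)) + 1 with hB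
  set n' := max (max Ni N) B with hn'
  have himc : (Γ.imF χ).Realize (pval ![Γ.en n']) :=
    hNi _ (Γ.en_mem n') (by rw [Γ.en_pos]; omega)
  rw [Γ.realize_imF] at himc
  obtain ⟨x, hGx, hRx, hrx⟩ := himc
  have hxD : x ∈ Γ.Ds := hRx.2.1.2
  have hxC : x ∈ Γ.C := Γ.C_initial (Γ.en_mem n') hxD hrx
  have hxe : Γ.en (Γ.pos x) = x := Γ.en_pos_eq hxC
  have hGx' : (Γ.goodF χ).Realize (pval ![Γ.en (Γ.pos x)]) := by rw [hxe]; exact hGx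
  have hV : Γ.en n' = Γ.Vf χ (Γ.pos x) := by
    refine Γ.V_eq hGx' ?_
    rw [hxe]
    exact hRx
  have hge : Γ.pos x ≥ N := by
    by_contra hlt
    push_neg at hlt
    have h1 : Γ.pos (Γ.Vf χ (Γ.pos x)) ≤ B - 1 := by
      have : Γ.pos (Γ.Vf χ (Γ.pos x)) ≤ (Finset.range N).sup (fun m => Γ.pos (Γ.Vf χ m)) :=
        Finset.le_sup (f := fun m => Γ.pos (Γ.Vf χ m)) (Finset.mem_range.mpr hlt)
      omega
    rw [← hV, Γ.en_pos] at h1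
    omega
  exact ⟨Γ.pos x, hge, hGx', by rw [← hV]; exact Γ.en_mem n'⟩

/-- eventually non-increasing with a value in C forces constancy, contradiction -/
lemma nonincr_bot (hχ : χ ∈ Γ.p) (ha₀ : a₀ ∈ Γ.Ps)
    (hu : ∀ y : M, defRel (∅ : Set M) Γ.θf a₀ y → χ.Realize (pval ![y]) → y = Γ.fn a₀)
    {N : ℕ} (hG : ∀ n ≥ N, (Γ.goodF χ).Realize (pval ![Γ.en n]))
    (hVC : Γ.Vf χ N ∈ Γ.C)
    (hstep : ∀ n ≥ N, Γ.Vf χ (n + 1) = Γ.Vf χ n ∨ Γ.r (Γ.Vf χ (n + 1)) (Γ.Vf χ n)) :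
    False := by
  -- all later values are in C
  have hC : ∀ m : ℕ, Γ.Vf χ (N + m) ∈ Γ.C := by
    intro m
    induction m with
    | zero => exact (congrArg (· ∈ Γ.C) (congrArg (Γ.Vf χ) (Nat.add_zero N))).mpr hVC
    | succ m ih =>
      have h2 : N + (m + 1) = (N + m) + 1 := by omega
      rw [h2]
      rcases hstep (N + m) (by omega) with heq | hlt
      · rw [heq]; exact ih
      · exact Γ.C_initial ih (Γ.V_D (hG _ (by omega))) hlt
  have hC' : ∀ n ≥ N, Γ.Vf χ n ∈ Γ.C := by
    intro n hn
    have : n = N + (n - N) := by omega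
    rw [this]
    exact hC _
  -- positions are non-increasing
  have hni : ∀ n ≥ N, Γ.pos (Γ.Vf χ (n + 1)) ≤ Γ.pos (Γ.Vf χ n) := by
    intro n hn
    rcases hstep n hn with heq | hlt
    · rw [heq]
    · exact le_of_lt (Γ.pos_strictMono (hC' _ (by omega)) (hC' _ hn) hlt)
  obtain ⟨n₁, hn₁, hstab⟩ := nat_stabilize (g := fun n => Γ.pos (Γ.Vf χ n)) hni
  refine Γ.const_bot hχ ha₀ hu (hC' n₁ (by omega)) (fun N' => ?_)
  refine ⟨max N' n₁, by omega, hG _ (by omega), ?_⟩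
  exact Γ.pos_injOn (hC' _ (by omega)) (hC' n₁ (by omega)) (hstab _ (by omega))

end Analysis

end Ctx
-- ===== step extraction and the sign cases =====

namespace Ctx

variable {L : FirstOrder.Language.{u, v}} {M : Type w} [L.Structure M] (Γ : Ctx L M)

section Signs

variable {χ : L.Formula (↥(∅ : Set M) ⊕ Fin 1)} {a₀ : M}

lemma step_at (ψ : L.Formula (↥(∅ : Set M) ⊕ Fin 2)) {n : ℕ}
    (hGn : (Γ.goodF χ).Realize (pval ![Γ.en n]))
    (hGn1 : (Γ.goodF χ).Realize (pval ![Γ.en (n + 1)]))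
    (h : (Γ.step χ ψ).Realize (pval ![Γ.en n])) :
    ψ.Realize (pval ![Γ.Vf χ n, Γ.Vf χ (n + 1)]) :=
  (Γ.realize_step χ ψ _).mp h (Γ.en (n + 1)) (Γ.Vf χ n) (Γ.Vf χ (n + 1))
    (Γ.isSucc_en n) (Γ.Rr_V hGn) (Γ.Rr_V hGn1)

lemma step_neg_at (ψ : L.Formula (↥(∅ : Set M) ⊕ Fin 2)) {n : ℕ}
    (hGn : (Γ.goodF χ).Realize (pval ![Γ.en n]))
    (hGn1 : (Γ.goodF χ).Realize (pval ![Γ.en (n + 1)]))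
    (h : ¬(Γ.step χ ψ).Realize (pval ![Γ.en n])) :
    ¬ψ.Realize (pval ![Γ.Vf χ n, Γ.Vf χ (n + 1)]) := by
  rw [Γ.realize_step] at h
  push_neg at h
  obtain ⟨z, y, y', h1, h2, h3, h4⟩ := h
  have hz : z = Γ.en (n + 1) := Γ.isSucc_unique h1 (Γ.isSucc_en n)
  subst hz
  rw [Γ.V_eq hGn h2, Γ.V_eq hGn1 h3] at h4
  exact h4

/-- the negative sign case yields a uniform backwards chain -/
lemma sign_neg (hχ : χ ∈ Γ.p) (ha₀ : a₀ ∈ Γ.Ps)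
    (hu : ∀ y : M, defRel (∅ : Set M) Γ.θf a₀ y → χ.Realize (pval ![y]) → y = Γ.fn a₀)
    (hneg : Γ.r (Γ.fn a₀) a₀) :
    ∃ (j : ℕ) (a : M), a ∈ Γ.Ps ∧ Γ.chainRel j (Γ.fn a) a := by
  classical
  -- sign formula in p
  have hsgn : Γ.post χ (prj ![1, 0] Γ.ltF) ∈ Γ.p := by
    refine Γ.post_mem hχ ha₀ hu ?_
    rw [realize_prj, comp_vec2]
    simp only [vec2_0, vec2_1]
    rw [Γ.realize_ltF]
    exact hneg
  obtain ⟨N₁, hN₁⟩ := Γ.mem_p_tail.mp hsgn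
  obtain ⟨N₀, hN₀⟩ := Γ.good_tail hχ ha₀ hu
  set N₂ := max N₀ N₁ with hN₂
  have hG : ∀ n ≥ N₂, (Γ.goodF χ).Realize (pval ![Γ.en n]) := fun n hn => hN₀ n (by omega)
  have hsg : ∀ n ≥ N₂, Γ.r (Γ.Vf χ n) (Γ.en n) := by
    intro n hn
    have h1 := hN₁ (Γ.en n) (Γ.en_mem n) (by rw [Γ.en_pos]; omega)
    rw [Γ.realize_post] at h1
    have h2 := h1 _ (Γ.Rr_V (hG n hn))
    rw [realize_prj, comp_vec2] at h2
    simp only [vec2_0, vec2_1] at h2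
    rw [Γ.realize_ltF] at h2
    exact h2
  have hVC : ∀ n ≥ N₂, Γ.Vf χ n ∈ Γ.C := fun n hn =>
    Γ.C_initial (Γ.en_mem n) (Γ.V_D (hG n hn)) (hsg n hn)
  by_cases hSN : Γ.step χ (Formula.not Γ.ltF) ∈ Γ.p
  · -- non-increasing: stabilizes: contradiction
    obtain ⟨N₃, hN₃⟩ := Γ.mem_p_tail.mp hSN
    set N₄ := max N₂ N₃ with hN₄
    refine absurd (Γ.nonincr_bot hχ ha₀ hu (N := N₄) (fun n hn => hG n (by omega))
      (hVC N₄ (by omega)) (fun n hn => ?_)) not_false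
    have h1 := Γ.step_at (Formula.not Γ.ltF) (hG n (by omega)) (hG (n + 1) (by omega))
      (hN₃ (Γ.en n) (Γ.en_mem n) (by rw [Γ.en_pos]; omega))
    rw [Formula.realize_not, Γ.realize_ltF] at h1
    rcases Γ.r_trichot (Γ.C_sub_D (hVC (n + 1) (by omega))) (Γ.C_sub_D (hVC n (by omega)))
      with heq | hlt | hgt
    · exact Or.inl heq
    · exact Or.inr hlt
    · exact absurd hgt h1
  · -- strictly increasing: bounded distance, pigeonhole
    obtain ⟨N₃, hN₃⟩ := Γ.not_mem_p_tail hSN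
    set N₄ := max N₂ N₃ with hN₄
    have hincr : ∀ n ≥ N₄, Γ.r (Γ.Vf χ n) (Γ.Vf χ (n + 1)) := by
      intro n hn
      have h1 := Γ.step_neg_at (Formula.not Γ.ltF) (hG n (by omega)) (hG (n + 1) (by omega))
        (hN₃ (Γ.en n) (Γ.en_mem n) (by rw [Γ.en_pos]; omega))
      rw [Formula.realize_not, Γ.realize_ltF, not_not] at h1
      exact h1
    have hposlt : ∀ n ≥ N₄, Γ.pos (Γ.Vf χ n) < Γ.pos (Γ.Vf χ (n + 1)) := fun n hn =>
      Γ.pos_strictMono (hVC n (by omega)) (hVC (n + 1) (by omega)) (hincr n hn)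
    -- distance from below is bounded
    set K := N₄ - Γ.pos (Γ.Vf χ N₄) with hK
    have hbound : ∀ n ≥ N₄, (fun n => n - Γ.pos (Γ.Vf χ n)) n ≤ K := by
      intro n hn
      have h1 := nat_ge_of_strict (g := fun n => Γ.pos (Γ.Vf χ n)) hposlt (n - N₄)
      have h2 : N₄ + (n - N₄) = n := by omega
      rw [h2] at h1
      show n - Γ.pos (Γ.Vf χ n) ≤ K
      omega
    obtain ⟨j, hjK, hjinf⟩ := nat_pigeon hbound
    have hchain : ∀ n ≥ N₄, n - Γ.pos (Γ.Vf χ n) = j →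
        Γ.chainRel j (Γ.Vf χ n) (Γ.en n) := by
      intro n hn hj
      have hd : Γ.pos (Γ.Vf χ n) < n := by
        have := hsg n (by omega)
        exact Γ.pos_strictMono (hVC n (by omega)) (Γ.en_mem n) this |>.trans_eq (Γ.en_pos n)
      have he : Γ.Vf χ n = Γ.en (Γ.pos (Γ.Vf χ n)) := (Γ.en_pos_eq (hVC n (by omega))).symm
      rw [he]
      have := Γ.chainRel_en (m := Γ.pos (Γ.Vf χ n)) (k := j)
      rwa [show Γ.pos (Γ.Vf χ n) + j = n by omega] at this
    have hpost : Γ.post χ (prj ![1, 0] (Γ.chainF j)) ∈ Γ.p := by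
      apply Γ.mem_p_of_unbounded
      intro N
      obtain ⟨n, hnN, hnN₄, hdn⟩ := hjinf N
      refine ⟨Γ.en n, Γ.en_mem n, by rw [Γ.en_pos]; omega, ?_⟩
      rw [Γ.realize_post]
      intro b hb
      rw [Γ.V_eq (hG n (by omega)) hb]
      rw [realize_prj, comp_vec2]
      simp only [vec2_0, vec2_1]
      rw [Γ.realize_chainF]
      exact hchain n hnN₄ hdn
    refine ⟨j, a₀, ha₀, ?_⟩
    have h1 := Γ.post_fn hχ hpost ha₀
    rw [realize_prj, comp_vec2] at h1
    simp only [vec2_0, vec2_1] at h1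
    rw [Γ.realize_chainF] at h1
    exact h1

end Signs

end Ctx
-- ===== the positive sign case =====

namespace Ctx

variable {L : FirstOrder.Language.{u, v}} {M : Type w} [L.Structure M] (Γ : Ctx L M)

section SignPos

variable {χ : L.Formula (↥(∅ : Set M) ⊕ Fin 1)} {a₀ : M}

lemma sign_pos (hχ : χ ∈ Γ.p) (ha₀ : a₀ ∈ Γ.Ps)
    (hu : ∀ y : M, defRel (∅ : Set M) Γ.θf a₀ y → χ.Realize (pval ![y]) → y = Γ.fn a₀)
    (hpos : Γ.r a₀ (Γ.fn a₀)) :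
    ∃ (j : ℕ) (a : M), a ∈ Γ.Ps ∧ Γ.chainRel j a (Γ.fn a) := by
  classical
  have hsgn : Γ.post χ Γ.ltF ∈ Γ.p := by
    refine Γ.post_mem hχ ha₀ hu ?_
    rw [Γ.realize_ltF]
    exact hpos
  obtain ⟨N₁, hN₁⟩ := Γ.mem_p_tail.mp hsgn
  obtain ⟨N₀, hN₀⟩ := Γ.good_tail hχ ha₀ hu
  set N₂ := max N₀ N₁ with hN₂
  have hG : ∀ n ≥ N₂, (Γ.goodF χ).Realize (pval ![Γ.en n]) := fun n hn => hN₀ n (by omega)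
  have hsg : ∀ n ≥ N₂, Γ.r (Γ.en n) (Γ.Vf χ n) := by
    intro n hn
    have h1 := hN₁ (Γ.en n) (Γ.en_mem n) (by rw [Γ.en_pos]; omega)
    rw [Γ.realize_post] at h1
    have h2 := h1 _ (Γ.Rr_V (hG n hn))
    rwa [Γ.realize_ltF] at h2
  by_cases hSP : Γ.step χ Γ.ltF ∈ Γ.p
  · -- values strictly increasing along C
    obtain ⟨N₃, hN₃⟩ := Γ.mem_p_tail.mp hSP
    set N₄ := max N₂ N₃ with hN₄
    have hincr : ∀ n ≥ N₄, Γ.r (Γ.Vf χ n) (Γ.Vf χ (n + 1)) := by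
      intro n hn
      have h1 := Γ.step_at Γ.ltF (hG n (by omega)) (hG (n + 1) (by omega))
        (hN₃ (Γ.en n) (Γ.en_mem n) (by rw [Γ.en_pos]; omega))
      rwa [Γ.realize_ltF] at h1
    by_cases hA1 : Γ.step χ Γ.succF ∈ Γ.p
    · -- consecutive values
      obtain ⟨N₅, hN₅⟩ := Γ.mem_p_tail.mp hA1
      set N₆ := max N₄ N₅ with hN₆
      have hsucc : ∀ n ≥ N₆, Γ.IsSucc (Γ.Vf χ n) (Γ.Vf χ (n + 1)) := by
        intro n hn
        have h1 := Γ.step_at Γ.succF (hG n (by omega)) (hG (n + 1) (by omega))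
          (hN₅ (Γ.en n) (Γ.en_mem n) (by rw [Γ.en_pos]; omega))
        rwa [Γ.realize_succF] at h1
      by_cases hex : ∃ n ≥ N₆, Γ.Vf χ n ∈ Γ.C
      · obtain ⟨n₁, hn₁, hVC⟩ := hex
        have hgt : n₁ < Γ.pos (Γ.Vf χ n₁) := by
          have h1 := Γ.pos_strictMono (Γ.en_mem n₁) hVC (hsg n₁ (by omega))
          rwa [Γ.en_pos] at h1
        set j₀ := Γ.pos (Γ.Vf χ n₁) - n₁ with hj₀
        have htel : ∀ m : ℕ, Γ.Vf χ (n₁ + m) = Γ.en (Γ.pos (Γ.Vf χ n₁) + m) := by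
          intro m
          induction m with
          | zero =>
            rw [Nat.add_zero, Nat.add_zero]
            exact (Γ.en_pos_eq hVC).symm
          | succ m ih =>
            have hs := hsucc (n₁ + m) (by omega)
            rw [ih] at hs
            have := Γ.isSucc_unique hs (Γ.isSucc_en (Γ.pos (Γ.Vf χ n₁) + m))
            rw [show n₁ + (m + 1) = (n₁ + m) + 1 by omega,
              show Γ.pos (Γ.Vf χ n₁) + (m + 1) = (Γ.pos (Γ.Vf χ n₁) + m) + 1 by omega]
            exact this
        have hchain : ∀ m : ℕ, Γ.chainRel j₀ (Γ.en (n₁ + m)) (Γ.Vf χ (n₁ + m)) := by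
          intro m
          rw [htel m, show Γ.pos (Γ.Vf χ n₁) + m = (n₁ + m) + j₀ by omega]
          exact Γ.chainRel_en
        have hpost : Γ.post χ (Γ.chainF j₀) ∈ Γ.p := by
          apply Γ.mem_p_of_unbounded
          intro N
          refine ⟨Γ.en (n₁ + N), Γ.en_mem _, by rw [Γ.en_pos]; omega, ?_⟩
          rw [Γ.realize_post]
          intro b hb
          rw [Γ.V_eq (hG (n₁ + N) (by omega)) hb, Γ.realize_chainF]
          exact hchain N
        refine ⟨j₀, a₀, ha₀, ?_⟩
        have h1 := Γ.post_fn hχ hpost ha₀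
        rwa [Γ.realize_chainF] at h1
      · push_neg at hex
        obtain ⟨n, hn, _, hC⟩ := Γ.lambda hχ ha₀ hu hpos N₆
        exact absurd hC (hex n hn)
    · -- values strictly increasing but never consecutive: gaps
      obtain ⟨N₅, hN₅⟩ := Γ.not_mem_p_tail hA1
      set N₆ := max N₄ N₅ with hN₆
      have hmid : ∀ n ≥ N₆, ∃ w, Γ.r (Γ.Vf χ n) w ∧ Γ.r w (Γ.Vf χ (n + 1)) := by
        intro n hn
        have h1 := Γ.step_neg_at Γ.succF (hG n (by omega)) (hG (n + 1) (by omega))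
          (hN₅ (Γ.en n) (Γ.en_mem n) (by rw [Γ.en_pos]; omega))
        rw [Γ.realize_succF, IsSucc] at h1
        push_neg at h1
        exact h1 (hincr n (by omega))
      by_cases hex : ∃ n ≥ N₆, Γ.Vf χ n ∈ Γ.C
      · obtain ⟨n₁, hn₁, hVC₁⟩ := hex
        by_cases hex2 : ∃ m ≥ n₁, Γ.Vf χ m ∉ Γ.C
        · obtain ⟨m, hm, hVm⟩ := hex2
          have hchainr : ∀ d : ℕ, Γ.r (Γ.Vf χ m) (Γ.Vf χ (m + d + 1)) := by
            intro d
            induction d with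
            | zero => exact hincr m (by omega)
            | succ d ih => exact Γ.r_trans ih (hincr (m + d + 1) (by omega))
          have hnone : ∀ k ≥ m, Γ.Vf χ k ∉ Γ.C := by
            intro k hk
            rcases Nat.eq_or_lt_of_le hk with rfl | hlt
            · exact hVm
            · intro hkC
              have hr := hchainr (k - m - 1)
              rw [show m + (k - m - 1) + 1 = k by omega] at hr
              exact hVm (Γ.C_initial hkC (Γ.V_D (hG m (by omega))) hr)
          obtain ⟨n, hn, _, hC⟩ := Γ.lambda hχ ha₀ hu hpos m
          exact absurd hC (hnone n hn)
        · push_neg at hex2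
          -- all values from n₁ on are in C; gaps give missed points, contradiction with imF
          have hstrict : ∀ k ≥ n₁, Γ.pos (Γ.Vf χ k) < Γ.pos (Γ.Vf χ (k + 1)) := fun k hk =>
            Γ.pos_strictMono (hex2 k hk) (hex2 (k + 1) (by omega)) (hincr k (by omega))
          have hmono : ∀ m k, n₁ ≤ m → m ≤ k → Γ.pos (Γ.Vf χ m) ≤ Γ.pos (Γ.Vf χ k) := by
            intro m k hm hmk
            have h1 := nat_ge_of_strict (g := fun n => Γ.pos (Γ.Vf χ n)) (N := m)
              (fun k hk => hstrict k (by omega)) (k - m)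
            rw [show m + (k - m) = k by omega] at h1
            omega
          obtain ⟨N₇, hN₇⟩ := Γ.mem_p_tail.mp (Γ.imF_mem hχ ha₀ hu hpos)
          set B := (Finset.range n₁).sup (fun m => Γ.pos (Γ.Vf χ m)) with hBdef
          set n := n₁ + (B + N₇ + 1) with hndef
          have hgrow : Γ.pos (Γ.Vf χ n₁) + (B + N₇ + 1) ≤ Γ.pos (Γ.Vf χ n) := by
            have h1 := nat_ge_of_strict (g := fun k => Γ.pos (Γ.Vf χ k)) (N := n₁)
              hstrict (B + N₇ + 1)
            simpa using h1
          obtain ⟨w, hw1, hw2⟩ := hmid n (by omega)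
          have hwD : w ∈ Γ.Ds := hw2.1
          have hwC : w ∈ Γ.C := Γ.C_initial (hex2 (n + 1) (by omega)) hwD hw2
          have hwlb : Γ.pos (Γ.Vf χ n) < Γ.pos w :=
            Γ.pos_strictMono (hex2 n (by omega)) hwC hw1
          have hwub : Γ.pos w < Γ.pos (Γ.Vf χ (n + 1)) :=
            Γ.pos_strictMono hwC (hex2 (n + 1) (by omega)) hw2
          have hImw := hN₇ w hwC (by omega)
          rw [Γ.realize_imF] at hImw
          obtain ⟨x, hGx, hRx, hrx⟩ := hImw
          have hxC : x ∈ Γ.C := Γ.C_initial hwC hRx.2.1.2 hrx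
          have hGx' : (Γ.goodF χ).Realize (pval ![Γ.en (Γ.pos x)]) := by
            rw [Γ.en_pos_eq hxC]; exact hGx
          have hwV : w = Γ.Vf χ (Γ.pos x) := by
            refine Γ.V_eq hGx' ?_
            rw [Γ.en_pos_eq hxC]
            exact hRx
          rcases lt_or_ge (Γ.pos x) n₁ with hsmall | hbig
          · have hB : Γ.pos (Γ.Vf χ (Γ.pos x)) ≤ B :=
              Finset.le_sup (f := fun m => Γ.pos (Γ.Vf χ m)) (Finset.mem_range.mpr hsmall)
            rw [← hwV] at hB
            omega
          · rcases le_or_gt (Γ.pos x) n with hle | hgt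
            · have := hmono (Γ.pos x) n hbig hle
              rw [← hwV] at this
              omega
            · have := hmono (n + 1) (Γ.pos x) (by omega) hgt
              rw [← hwV] at this
              omega
      · push_neg at hex
        obtain ⟨n, hn, _, hC⟩ := Γ.lambda hχ ha₀ hu hpos N₆
        exact absurd hC (hex n hn)
  · -- values eventually non-increasing
    obtain ⟨N₃, hN₃⟩ := Γ.not_mem_p_tail hSP
    set N₄ := max N₂ N₃ with hN₄
    have hstep : ∀ n ≥ N₄, Γ.Vf χ (n + 1) = Γ.Vf χ n ∨ Γ.r (Γ.Vf χ (n + 1)) (Γ.Vf χ n) := by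
      intro n hn
      have h1 := Γ.step_neg_at Γ.ltF (hG n (by omega)) (hG (n + 1) (by omega))
        (hN₃ (Γ.en n) (Γ.en_mem n) (by rw [Γ.en_pos]; omega))
      rw [Γ.realize_ltF] at h1
      rcases Γ.r_trichot (Γ.V_D (hG (n + 1) (by omega))) (Γ.V_D (hG n (by omega)))
        with heq | hlt | hgt
      · exact Or.inl heq
      · exact Or.inr hlt
      · exact absurd hgt h1
    by_cases hex : ∃ n ≥ N₄, Γ.Vf χ n ∈ Γ.C
    · obtain ⟨n₁, hn₁, hVC⟩ := hex
      exact absurd (Γ.nonincr_bot hχ ha₀ hu (N := n₁) (fun k hk => hG k (by omega)) hVC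
        (fun k hk => hstep k (by omega))) not_false
    · push_neg at hex
      obtain ⟨n, hn, _, hC⟩ := Γ.lambda hχ ha₀ hu hpos N₄
      exact absurd hC (hex n hn)

end SignPos

end Ctx
-- ===== conclusions =====

namespace Ctx

variable {L : FirstOrder.Language.{u, v}} {M : Type w} [L.Structure M] (Γ : Ctx L M)

section Conclude

variable {χ : L.Formula (↥(∅ : Set M) ⊕ Fin 1)} {a₀ : M}

lemma conclude_pos (hχ : χ ∈ Γ.p) (ha₀ : a₀ ∈ Γ.Ps)
    (hu : ∀ y : M, defRel (∅ : Set M) Γ.θf a₀ y → χ.Realize (pval ![y]) → y = Γ.fn a₀)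
    {j : ℕ} {a : M} (haP : a ∈ Γ.Ps) (hch : Γ.chainRel j a (Γ.fn a)) :
    ∀ a' ∈ Γ.Ps, Γ.fn a' = Γ.S^[j] a' := by
  have hpost : Γ.post χ (Γ.chainF j) ∈ Γ.p := by
    refine Γ.mem_p_of_mem_P haP ((Γ.realize_post _ _ _).mpr fun b hb => ?_)
    rw [Γ.Rr_unique hχ ha₀ hu haP hb, Γ.realize_chainF]
    exact hch
  intro a' ha'
  have h1 := Γ.post_fn hχ hpost ha'
  rw [Γ.realize_chainF] at h1
  exact Γ.chainRel_S h1 ha'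

lemma conclude_neg (hχ : χ ∈ Γ.p) (ha₀ : a₀ ∈ Γ.Ps)
    (hu : ∀ y : M, defRel (∅ : Set M) Γ.θf a₀ y → χ.Realize (pval ![y]) → y = Γ.fn a₀)
    {j : ℕ} {a : M} (haP : a ∈ Γ.Ps) (hch : Γ.chainRel j (Γ.fn a) a) :
    ∀ a' ∈ Γ.Ps, Γ.S^[j] (Γ.fn a') = a' := by
  have hpost : Γ.post χ (prj ![1, 0] (Γ.chainF j)) ∈ Γ.p := by
    refine Γ.mem_p_of_mem_P haP ((Γ.realize_post _ _ _).mpr fun b hb => ?_)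
    rw [Γ.Rr_unique hχ ha₀ hu haP hb]
    rw [realize_prj, comp_vec2]
    simp only [vec2_0, vec2_1]
    rw [Γ.realize_chainF]
    exact hch
  intro a' ha'
  have h1 := Γ.post_fn hχ hpost ha'
  rw [realize_prj, comp_vec2] at h1
  simp only [vec2_0, vec2_1] at h1
  rw [Γ.realize_chainF] at h1
  exact (Γ.chainRel_S h1 (Γ.hfmap a' ha')).symm

end Conclude

end Ctx

/-- Lemma 5. If `p ∈ S₁(T)` is simple, witnessed by `C` and
`(D, <)`, and `f : p(M) → p(M)` is relatively ∅-definable, then `f = Sᵏ` for some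
`k ∈ ℤ`, where `S` is the successor function of the discrete order `(p(M), <)`. -/
theorem statement10 (L : FirstOrder.Language.{u, v}) (hL : L.card ≤ ℵ₀)
    (T : L.Theory) (hT : T.IsComplete)
    (M : Type w) [L.Structure M] (hMT : M ⊨ T) (hMinf : Infinite M)
    (hsat : IsAleph1Saturated L M)
    (p : Set (L.Formula (↥(∅ : Set M) ⊕ Fin 1))) (C : Set M)
    (δ : L.Formula (↥(∅ : Set M) ⊕ Fin 1)) (lt : L.Formula (↥(∅ : Set M) ⊕ Fin 2))
    (hp : IsSimpleWitness (∅ : Set M) p C δ lt)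
    (S : M → M)
    (hS : ∀ a ∈ typeSet (∅ : Set M) p,
      SuccIn (gRel (∅ : Set M) δ lt) (typeSet (∅ : Set M) p) a (S a))
    (hSsurj : ∀ b ∈ typeSet (∅ : Set M) p, ∃ a ∈ typeSet (∅ : Set M) p, S a = b)
    (f : M → M) (hfmap : ∀ a ∈ typeSet (∅ : Set M) p, f a ∈ typeSet (∅ : Set M) p)
    (θ : L.Formula (↥(∅ : Set M) ⊕ Fin 2))
    (hgraph : ∀ a b : M,
      (a ∈ typeSet (∅ : Set M) p ∧ b ∈ typeSet (∅ : Set M) p ∧ defRel (∅ : Set M) θ a b) ↔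
      (a ∈ typeSet (∅ : Set M) p ∧ f a = b)) :
    ∃ k : ℤ, ∀ a ∈ typeSet (∅ : Set M) p, zIter S k a (f a) := by
  classical
  set Γ : Ctx L M :=
    ⟨p, C, δ, lt, hp, S, hS, f, hfmap, θ, hgraph, hsat⟩ with hΓ
  obtain ⟨a₀, ha₀⟩ := Γ.P_nonempty
  obtain ⟨χ, hχ, hu⟩ := Γ.exists_chi ha₀
  have hfP := Γ.hfmap a₀ ha₀
  rcases Γ.r_trichot (Γ.P_sub_D ha₀) (Γ.P_sub_D hfP) with heq | hp1 | hn1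
  · -- f a₀ = a₀
    have hconc := Γ.conclude_pos hχ ha₀ hu (j := 0) ha₀ heq
    refine ⟨(0 : ℤ), fun a ha => ?_⟩
    rw [zIter, if_pos (le_refl (0 : ℤ))]
    exact (hconc a ha).symm
  · obtain ⟨j, a, haP, hch⟩ := Γ.sign_pos hχ ha₀ hu hp1
    have hconc := Γ.conclude_pos hχ ha₀ hu haP hch
    refine ⟨(j : ℤ), fun a' ha' => ?_⟩
    rw [zIter, if_pos (by positivity)]
    rw [Int.toNat_natCast]
    exact (hconc a' ha').symm
  · obtain ⟨j, a, haP, hch⟩ := Γ.sign_neg hχ ha₀ hu hn1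
    have hconc := Γ.conclude_neg hχ ha₀ hu haP hch
    refine ⟨-(j : ℤ), fun a' ha' => ?_⟩
    rw [zIter]
    split_ifs with h0
    · have hj0 : j = 0 := by omega
      subst hj0
      have hres := hconc a' ha'
      simp only [Function.iterate_zero, id_eq] at hres
      simp only [Nat.cast_zero, neg_zero, Int.toNat_zero, Function.iterate_zero, id_eq]
      exact hres.symm
    · rw [neg_neg, Int.toNat_natCast]
      exact hconc a' ha'


end PaperDef
end

section
/- Let T be a complete first-order theory with infinite models in a countable language L, let M be an ℵ₁-saturated model of T, let p ∈ S₁(T) be a simple type, witnessed by C and (D,<), and let S denote the successor function of the discrete order (p(M),<). If f : p(M) → p(M) is a relatively ∅-definable function (its graph equals p(M)² ∩ θ(M²) for some L-formula θ(x,y)), then f is an automorphism of the linear order (p(M),<): f is a bijection and for all a,b ∈ p(M), a < b implies f(a) < f(b). -/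
open FirstOrder FirstOrder.Language Set Cardinal

universe u v w

namespace PaperDef

variable {L : FirstOrder.Language.{u, v}}

variable {M : Type w} [L.Structure M]

section Kit

variable (L)

/-- `R` is a ∅-definable `n`-ary relation. -/
def Dn (n : ℕ) (R : (Fin n → M) → Prop) : Prop :=
  ∃ φ : L.Formula (↥(∅ : Set M) ⊕ Fin n), ∀ v : Fin n → M, φ.Realize (pval v) ↔ R v

variable {L}

lemma pval_eq_of_notinl {n : ℕ} (v : Fin n → M) (w : ↥(∅ : Set M) ⊕ Fin n → M)
    (h : ∀ i, w (Sum.inr i) = v i) : w = pval v := by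
  funext x
  rcases x with e | i
  · exact absurd e.2 (Set.notMem_empty _)
  · exact h i

lemma Dn_congr {n : ℕ} {R S : (Fin n → M) → Prop} (h : ∀ v, R v ↔ S v)
    (hR : Dn L n R) : Dn L n S := by
  obtain ⟨φ, hφ⟩ := hR
  exact ⟨φ, fun v => (hφ v).trans (h v)⟩

lemma Dn_and {n : ℕ} {R S : (Fin n → M) → Prop} (hR : Dn L n R) (hS : Dn L n S) :
    Dn L n (fun v => R v ∧ S v) := by
  obtain ⟨φ, hφ⟩ := hR; obtain ⟨ψ, hψ⟩ := hS
  refine ⟨φ ⊓ ψ, fun v => ?_⟩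
  rw [Formula.realize_inf, hφ, hψ]

lemma Dn_not {n : ℕ} {R : (Fin n → M) → Prop} (hR : Dn L n R) :
    Dn L n (fun v => ¬ R v) := by
  obtain ⟨φ, hφ⟩ := hR
  refine ⟨φ.not, fun v => ?_⟩
  rw [Formula.realize_not, hφ]

lemma Dn_or {n : ℕ} {R S : (Fin n → M) → Prop} (hR : Dn L n R) (hS : Dn L n S) :
    Dn L n (fun v => R v ∨ S v) := by
  obtain ⟨φ, hφ⟩ := hR; obtain ⟨ψ, hψ⟩ := hS
  refine ⟨φ ⊔ ψ, fun v => ?_⟩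
  rw [Formula.realize_sup, hφ, hψ]

lemma Dn_eq {n : ℕ} (i j : Fin n) : Dn L n (fun v : Fin n → M => v i = v j) := by
  refine ⟨Term.equal (Term.var (Sum.inr i)) (Term.var (Sum.inr j)), fun v => ?_⟩
  simp [Term.equal, Formula.Realize, pval]

/-- existential projection plus reindexing, all in one. -/
lemma Dn_ex {m n k : ℕ} {R : (Fin m → M) → Prop} (hR : Dn L m R)
    (f : Fin m → (Fin n) ⊕ (Fin k)) :
    Dn L n (fun v => ∃ w : Fin k → M, R (fun i => Sum.elim v w (f i))) := by
  classical
  obtain ⟨φ, hφ⟩ := hR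
  let g : (↥(∅ : Set M) ⊕ Fin m) → (↥(∅ : Set M) ⊕ Fin n) ⊕ Fin k := fun x =>
    match x with
    | Sum.inl e => Sum.inl (Sum.inl e)
    | Sum.inr i => Sum.map Sum.inr id (f i)
  refine ⟨(φ.relabel g).iExs (Fin k), fun v => ?_⟩
  rw [Formula.realize_iExs]
  simp only [Formula.realize_relabel]
  have key : ∀ w : Fin k → M,
      (fun a => Sum.elim (pval v) w (g a)) = pval (fun i => Sum.elim v w (f i)) := by
    intro w
    apply pval_eq_of_notinl
    intro i
    rcases hfi : f i with j | j <;> simp [g, hfi, pval]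
  show (∃ w : Fin k → M, φ.Realize fun a => Sum.elim (pval v) w (g a)) ↔
    ∃ w : Fin k → M, R (fun i => Sum.elim v w (f i))
  constructor
  · rintro ⟨w, hw⟩
    rw [key w] at hw
    exact ⟨w, (hφ _).mp hw⟩
  · rintro ⟨w, hw⟩
    refine ⟨w, ?_⟩
    rw [key w]
    exact (hφ _).mpr hw

lemma Dn_all {m n k : ℕ} {R : (Fin m → M) → Prop} (hR : Dn L m R)
    (f : Fin m → (Fin n) ⊕ (Fin k)) :
    Dn L n (fun v => ∀ w : Fin k → M, R (fun i => Sum.elim v w (f i))) := by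
  have h1 := Dn_not (Dn_ex (Dn_not hR) f)
  apply Dn_congr (fun v => ?_) h1
  push_neg
  rfl

lemma Dn_reindex {m n : ℕ} {R : (Fin m → M) → Prop} (hR : Dn L m R)
    (f : Fin m → Fin n) : Dn L n (fun v => R (v ∘ f)) := by
  have h1 := Dn_ex (k := 0) hR (fun i => Sum.inl (f i))
  apply Dn_congr (fun v => ?_) h1
  constructor
  · rintro ⟨w, hw⟩; exact hw
  · intro h; exact ⟨default, h⟩

end Kit

section Wrappers

variable (L)

abbrev P1 (X : M → Prop) : Prop := Dn L 1 (fun v => X (v 0))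
abbrev P2 (R : M → M → Prop) : Prop := Dn L 2 (fun v => R (v 0) (v 1))
abbrev P3 (R : M → M → M → Prop) : Prop := Dn L 3 (fun v => R (v 0) (v 1) (v 2))
abbrev P4 (R : M → M → M → M → Prop) : Prop := Dn L 4 (fun v => R (v 0) (v 1) (v 2) (v 3))

variable {L}

lemma P1_congr {X Y : M → Prop} (h : ∀ a, X a ↔ Y a) (hX : P1 L X) : P1 L Y :=
  Dn_congr (fun v => h (v 0)) hX

lemma P2_congr {X Y : M → M → Prop} (h : ∀ a b, X a b ↔ Y a b) (hX : P2 L X) : P2 L Y :=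
  Dn_congr (fun v => h (v 0) (v 1)) hX

lemma P3_congr {X Y : M → M → M → Prop} (h : ∀ a b c, X a b c ↔ Y a b c) (hX : P3 L X) :
    P3 L Y := Dn_congr (fun v => h (v 0) (v 1) (v 2)) hX

lemma P1_and {X Y : M → Prop} (hX : P1 L X) (hY : P1 L Y) : P1 L (fun a => X a ∧ Y a) :=
  Dn_and hX hY

lemma P1_or {X Y : M → Prop} (hX : P1 L X) (hY : P1 L Y) : P1 L (fun a => X a ∨ Y a) :=
  Dn_or hX hY

lemma P1_not {X : M → Prop} (hX : P1 L X) : P1 L (fun a => ¬ X a) := Dn_not hX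

lemma P2_and {X Y : M → M → Prop} (hX : P2 L X) (hY : P2 L Y) :
    P2 L (fun a b => X a b ∧ Y a b) := Dn_and hX hY

lemma P2_or {X Y : M → M → Prop} (hX : P2 L X) (hY : P2 L Y) :
    P2 L (fun a b => X a b ∨ Y a b) := Dn_or hX hY

lemma P2_not {X : M → M → Prop} (hX : P2 L X) : P2 L (fun a b => ¬ X a b) := Dn_not hX

lemma P3_and {X Y : M → M → M → Prop} (hX : P3 L X) (hY : P3 L Y) :
    P3 L (fun a b c => X a b c ∧ Y a b c) := Dn_and hX hY

lemma P3_or {X Y : M → M → M → Prop} (hX : P3 L X) (hY : P3 L Y) :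
    P3 L (fun a b c => X a b c ∨ Y a b c) := Dn_or hX hY

lemma P3_not {X : M → M → M → Prop} (hX : P3 L X) : P3 L (fun a b c => ¬ X a b c) := Dn_not hX

lemma P4_and {X Y : M → M → M → M → Prop} (hX : P4 L X) (hY : P4 L Y) :
    P4 L (fun a b c d => X a b c d ∧ Y a b c d) := Dn_and hX hY

lemma P2_ex {R : M → M → Prop} (hR : P2 L R) : P1 L (fun a => ∃ b, R a b) := by
  have h := Dn_ex hR (![Sum.inl 0, Sum.inr 0] : Fin 2 → Fin 1 ⊕ Fin 1)
  apply Dn_congr (fun v => ?_) h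
  constructor
  · rintro ⟨w, hw⟩; exact ⟨w 0, by simpa using hw⟩
  · rintro ⟨b, hb⟩; exact ⟨fun _ => b, by simpa using hb⟩

lemma P2_all {R : M → M → Prop} (hR : P2 L R) : P1 L (fun a => ∀ b, R a b) := by
  have h := Dn_all hR (![Sum.inl 0, Sum.inr 0] : Fin 2 → Fin 1 ⊕ Fin 1)
  apply Dn_congr (fun v => ?_) h
  constructor
  · intro hw b; simpa using hw (fun _ => b)
  · intro hb w; simpa using hb (w 0)

lemma P3_ex {R : M → M → M → Prop} (hR : P3 L R) : P2 L (fun a b => ∃ c, R a b c) := by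
  have h := Dn_ex hR (![Sum.inl 0, Sum.inl 1, Sum.inr 0] : Fin 3 → Fin 2 ⊕ Fin 1)
  apply Dn_congr (fun v => ?_) h
  constructor
  · rintro ⟨w, hw⟩; exact ⟨w 0, by simpa using hw⟩
  · rintro ⟨c, hc⟩; exact ⟨fun _ => c, by simpa using hc⟩

lemma P3_all {R : M → M → M → Prop} (hR : P3 L R) : P2 L (fun a b => ∀ c, R a b c) := by
  have h := Dn_all hR (![Sum.inl 0, Sum.inl 1, Sum.inr 0] : Fin 3 → Fin 2 ⊕ Fin 1)
  apply Dn_congr (fun v => ?_) h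
  constructor
  · intro hw c; simpa using hw (fun _ => c)
  · intro hc w; simpa using hc (w 0)

lemma P4_ex {R : M → M → M → M → Prop} (hR : P4 L R) : P3 L (fun a b c => ∃ d, R a b c d) := by
  have h := Dn_ex hR (![Sum.inl 0, Sum.inl 1, Sum.inl 2, Sum.inr 0] : Fin 4 → Fin 3 ⊕ Fin 1)
  apply Dn_congr (fun v => ?_) h
  constructor
  · rintro ⟨w, hw⟩; exact ⟨w 0, by simpa using hw⟩
  · rintro ⟨d, hd⟩; exact ⟨fun _ => d, by simpa using hd⟩

lemma P1_l2a {X : M → Prop} (hX : P1 L X) : P2 L (fun a _ => X a) := by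
  have h := Dn_reindex hX ![(0 : Fin 2)]
  exact Dn_congr (fun v => by simp) h

lemma P1_l2b {X : M → Prop} (hX : P1 L X) : P2 L (fun _ b => X b) := by
  have h := Dn_reindex hX ![(1 : Fin 2)]
  exact Dn_congr (fun v => by simp) h

lemma P1_l3 {X : M → Prop} (i : Fin 3) (hX : P1 L X) :
    P3 L (fun a b c => X (![a, b, c] i)) := by
  have h := Dn_reindex hX ![i]
  apply Dn_congr (fun v => ?_) h
  have hv : ∀ k : Fin 3, v k = ![v 0, v 1, v 2] k := by
    intro k; fin_cases k <;> simp
  simp only [Function.comp_apply, Matrix.cons_val_zero]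
  rw [hv i]

lemma P2_l3 {R : M → M → Prop} (i j : Fin 3) (hR : P2 L R) :
    P3 L (fun a b c => R (![a, b, c] i) (![a, b, c] j)) := by
  have h := Dn_reindex hR ![i, j]
  apply Dn_congr (fun v => ?_) h
  have hv : ∀ k : Fin 3, v k = ![v 0, v 1, v 2] k := by
    intro k; fin_cases k <;> simp
  simp only [Function.comp_apply, Matrix.cons_val_zero, Matrix.cons_val_one, Matrix.head_cons]
  rw [hv i, hv j]

lemma P2_l4 {R : M → M → Prop} (i j : Fin 4) (hR : P2 L R) :
    P4 L (fun a b c d => R (![a, b, c, d] i) (![a, b, c, d] j)) := by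
  have h := Dn_reindex hR ![i, j]
  apply Dn_congr (fun v => ?_) h
  have hv : ∀ k : Fin 4, v k = ![v 0, v 1, v 2, v 3] k := by
    intro k; fin_cases k <;> simp
  simp only [Function.comp_apply, Matrix.cons_val_zero, Matrix.cons_val_one, Matrix.head_cons]
  rw [hv i, hv j]

lemma P1_l4 {X : M → Prop} (i : Fin 4) (hX : P1 L X) :
    P4 L (fun a b c d => X (![a, b, c, d] i)) := by
  have h := Dn_reindex hX ![i]
  apply Dn_congr (fun v => ?_) h
  have hv : ∀ k : Fin 4, v k = ![v 0, v 1, v 2, v 3] k := by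
    intro k; fin_cases k <;> simp
  simp only [Function.comp_apply, Matrix.cons_val_zero]
  rw [hv i]

lemma P2_eq : P2 L (fun a b : M => a = b) := Dn_eq 0 1

lemma P2_swap {R : M → M → Prop} (hR : P2 L R) : P2 L (fun a b => R b a) := by
  have h := Dn_reindex hR ![(1 : Fin 2), 0]
  apply Dn_congr (fun v => ?_) h
  simp

end Wrappers




section Plumbing

variable {L : FirstOrder.Language.{u, v}} {M : Type w} [L.Structure M]

lemma vec1_eta (v : Fin 1 → M) : ![v 0] = v := by
  funext i; fin_cases i <;> simp

lemma vec2_eta (v : Fin 2 → M) : ![v 0, v 1] = v := by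
  funext i; fin_cases i <;> simp

/-- conjunction of a list of formulas -/
def conjList (l : List (L.Formula (↥(∅ : Set M) ⊕ Fin 1))) : L.Formula (↥(∅ : Set M) ⊕ Fin 1) :=
  l.foldr (· ⊓ ·) ⊤

lemma realize_conjList (l : List (L.Formula (↥(∅ : Set M) ⊕ Fin 1))) (v : ↥(∅ : Set M) ⊕ Fin 1 → M) :
    (conjList l).Realize v ↔ ∀ φ ∈ l, φ.Realize v := by
  induction l with
  | nil => simp [conjList, Formula.Realize]
  | cons φ l ih =>
      simp only [conjList, List.foldr_cons, List.mem_cons]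
      rw [Formula.realize_inf]
      rw [show (List.foldr (· ⊓ ·) ⊤ l) = conjList l from rfl, ih]
      constructor
      · rintro ⟨h1, h2⟩ ψ (rfl | hψ)
        · exact h1
        · exact h2 _ hψ
      · intro h
        exact ⟨h φ (Or.inl rfl), fun ψ hψ => h ψ (Or.inr hψ)⟩

/-- substituting two parameters from `A` into a ∅-definable ternary relation -/
lemma param2_formula {R : M → M → M → Prop} (hR : P3 L R) (A : Set M) (b c : M)
    (hb : b ∈ A) (hc : c ∈ A) :
    ∃ ξ : L.Formula (↥A ⊕ Fin 1), ∀ a : M, ξ.Realize (pval ![a]) ↔ R a b c := by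
  obtain ⟨φ, hφ⟩ := hR
  let g : (↥(∅ : Set M) ⊕ Fin 3) → (↥A ⊕ Fin 1) := fun x =>
    match x with
    | Sum.inl e => absurd e.2 (Set.notMem_empty _)
    | Sum.inr i => ![Sum.inr 0, Sum.inl ⟨b, hb⟩, Sum.inl ⟨c, hc⟩] i
  refine ⟨φ.relabel g, fun a => ?_⟩
  rw [Formula.realize_relabel]
  have key : pval ![a] ∘ g = pval ![a, b, c] := by
    apply pval_eq_of_notinl
    intro i
    fin_cases i <;> simp [g, pval]
  rw [key]
  have := hφ ![a, b, c]
  simpa using this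

/-- relabeling a ∅-formula to a formula over parameter set `A` -/
def relabel1 (A : Set M) (φ : L.Formula (↥(∅ : Set M) ⊕ Fin 1)) : L.Formula (↥A ⊕ Fin 1) :=
  φ.relabel (fun x =>
    match x with
    | Sum.inl e => absurd e.2 (Set.notMem_empty _)
    | Sum.inr i => Sum.inr i)

lemma realize_relabel1 (A : Set M) (φ : L.Formula (↥(∅ : Set M) ⊕ Fin 1)) (a : M) :
    (relabel1 A φ).Realize (pval ![a]) ↔ φ.Realize (pval ![a]) := by
  rw [relabel1, Formula.realize_relabel]
  have key : pval (A := A) ![a] ∘ (fun x : ↥(∅ : Set M) ⊕ Fin 1 =>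
      match x with
      | Sum.inl e => absurd e.2 (Set.notMem_empty _)
      | Sum.inr i => (Sum.inr i : ↥A ⊕ Fin 1)) = pval ![a] := by
    apply pval_eq_of_notinl
    intro i
    fin_cases i <;> simp [pval]
  rw [key]

/-- substituting one parameter from `A` into a ∅-definable binary relation -/
lemma param1_formula {R : M → M → Prop} (hR : P2 L R) (A : Set M) (b : M)
    (hb : b ∈ A) :
    ∃ ξ : L.Formula (↥A ⊕ Fin 1), ∀ a : M, ξ.Realize (pval ![a]) ↔ R a b := by
  obtain ⟨φ, hφ⟩ := hR
  let g : (↥(∅ : Set M) ⊕ Fin 2) → (↥A ⊕ Fin 1) := fun x =>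
    match x with
    | Sum.inl e => absurd e.2 (Set.notMem_empty _)
    | Sum.inr i => ![Sum.inr 0, Sum.inl ⟨b, hb⟩] i
  refine ⟨φ.relabel g, fun a => ?_⟩
  rw [Formula.realize_relabel]
  have key : pval ![a] ∘ g = pval ![a, b] := by
    apply pval_eq_of_notinl
    intro i
    fin_cases i <;> simp [g, pval]
  rw [key]
  have := hφ ![a, b]
  simpa using this

lemma exists_origins {α β : Type*} (s : Finset β) (g : α → β) (P : Set α) :
    ∃ l : List α, (∀ ψ ∈ l, ψ ∈ P) ∧ ∀ b ∈ s, (∃ a ∈ P, g a = b) → ∃ ψ ∈ l, g ψ = b := by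
  classical
  induction s using Finset.induction_on with
  | empty => exact ⟨[], by simp, by simp⟩
  | @insert b s hb ih =>
      obtain ⟨l, hl1, hl2⟩ := ih
      by_cases hex : ∃ a ∈ P, g a = b
      · obtain ⟨a, haP, hab⟩ := hex
        refine ⟨a :: l, ?_, ?_⟩
        · rintro ψ hψ
          rcases List.mem_cons.mp hψ with rfl | h
          · exact haP
          · exact hl1 ψ h
        · intro b' hb' hex'
          rcases Finset.mem_insert.mp hb' with rfl | h
          · exact ⟨a, List.mem_cons_self, hab⟩
          · obtain ⟨ψ, h1, h2⟩ := hl2 b' h hex'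
            exact ⟨ψ, List.mem_cons_of_mem _ h1, h2⟩
      · refine ⟨l, hl1, fun b' hb' hex' => ?_⟩
        rcases Finset.mem_insert.mp hb' with rfl | h
        · exact absurd hex' hex
        · exact hl2 b' h hex'

end Plumbing

section MainDev

variable (L : FirstOrder.Language.{u, v}) (M : Type w) [L.Structure M]

structure Setup where
  hsat : IsAleph1Saturated L M
  p : Set (L.Formula (↥(∅ : Set M) ⊕ Fin 1))
  C : Set M
  del : L.Formula (↥(∅ : Set M) ⊕ Fin 1)
  ltf : L.Formula (↥(∅ : Set M) ⊕ Fin 2)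
  hp : IsSimpleWitness (∅ : Set M) p C del ltf
  f : M → M
  th : L.Formula (↥(∅ : Set M) ⊕ Fin 2)
  hgraph : ∀ a b : M,
    (a ∈ typeSet (∅ : Set M) p ∧ b ∈ typeSet (∅ : Set M) p ∧ defRel (∅ : Set M) th a b) ↔
    (a ∈ typeSet (∅ : Set M) p ∧ f a = b)

variable {L M}

namespace Setup

variable (S : Setup L M)

def DD : Set M := defSet (∅ : Set M) S.del
def lt' : M → M → Prop := gRel (∅ : Set M) S.del S.ltf
def pM : Set M := typeSet (∅ : Set M) S.p
def pP (X : M → Prop) : Prop := P1 L X ∧ {c ∈ S.C | ¬ X c}.Finite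

lemma lt_D {a b : M} (h : S.lt' a b) : a ∈ S.DD ∧ b ∈ S.DD := ⟨h.1, h.2.1⟩

lemma lt_irrefl {a : M} (h : S.lt' a a) : False :=
  S.hp.2.2.2.1.1 a h.1 h

lemma lt_trans {a b c : M} (h1 : S.lt' a b) (h2 : S.lt' b c) : S.lt' a c :=
  S.hp.2.2.2.1.2.1 a h1.1 b h1.2.1 c h2.2.1 h1 h2

lemma lt_total {a b : M} (ha : a ∈ S.DD) (hb : b ∈ S.DD) :
    a = b ∨ S.lt' a b ∨ S.lt' b a :=
  S.hp.2.2.2.1.2.2 a ha b hb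

lemma lt_asymm {a b : M} (h1 : S.lt' a b) (h2 : S.lt' b a) : False :=
  S.lt_irrefl (S.lt_trans h1 h2)

lemma C_sub_D : S.C ⊆ S.DD := S.hp.2.2.2.2.1.1

lemma C_initial {c d : M} (hc : c ∈ S.C) (hd : d ∈ S.DD) (h : S.lt' d c) : d ∈ S.C :=
  S.hp.2.2.2.2.1.2 c hc d hd h

lemma C_infinite : S.C.Infinite := S.hp.2.1

lemma C_dcl {c : M} (hc : c ∈ S.C) : c ∈ dclSet L (∅ : Set M) := S.hp.2.2.1 hc

lemma C_pred_finite {c : M} (hc : c ∈ S.C) : {c' ∈ S.C | S.lt' c' c}.Finite :=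
  S.hp.2.2.2.2.2.1.2 c hc

lemma crit (φ : L.Formula (↥(∅ : Set M) ⊕ Fin 1)) :
    φ ∈ S.p ↔ {c ∈ S.C | ¬ φ.Realize (pval ![c])}.Finite :=
  S.hp.2.2.2.2.2.2 φ

/-- the not-below-a-C-point part of C is finite -/
lemma C_le_finite {c : M} (hc : c ∈ S.C) : {c' ∈ S.C | ¬ S.lt' c c'}.Finite := by
  apply Set.Finite.subset ((S.C_pred_finite hc).union (Set.finite_singleton c))
  rintro c' ⟨hc', hn⟩
  rcases S.lt_total (S.C_sub_D hc) (S.C_sub_D hc') with h | h | h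
  · exact Or.inr (by simpa using h.symm)
  · exact absurd h hn
  · exact Or.inl ⟨hc', h⟩

/-- atoms -/
lemma PD : P1 L (· ∈ S.DD) := by
  refine ⟨S.del, fun v => ?_⟩
  show _ ↔ S.del.Realize (pval ![v 0])
  rw [vec1_eta]

lemma Pp (φ : L.Formula (↥(∅ : Set M) ⊕ Fin 1)) :
    P1 L (fun a : M => φ.Realize (pval ![a])) := by
  refine ⟨φ, fun v => ?_⟩
  show _ ↔ φ.Realize (pval ![v 0])
  rw [vec1_eta]

lemma Plt : P2 L S.lt' := by
  have hD := S.PD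
  have h1 : P2 L (defRel (∅ : Set M) S.ltf) := by
    refine ⟨S.ltf, fun v => ?_⟩
    show _ ↔ S.ltf.Realize (pval ![v 0, v 1])
    rw [vec2_eta]
  exact P2_congr (fun a b => Iff.rfl) (P2_and (P1_l2a hD) (P2_and (P1_l2b hD) h1))

lemma Pth : P2 L (defRel (∅ : Set M) S.th) := by
  refine ⟨S.th, fun v => ?_⟩
  show _ ↔ S.th.Realize (pval ![v 0, v 1])
  rw [vec2_eta]

lemma Psing {u : M} (hu : u ∈ dclSet L (∅ : Set M)) : P1 L (· = u) := by
  obtain ⟨φ, h1, h2⟩ := hu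
  refine P1_congr (fun a => ?_) (Pp φ)
  constructor
  · intro h; exact h2 a h
  · rintro rfl; exact h1

/-- the dichotomy: a definable set is finite or cofinite on C -/
lemma K1 {X : M → Prop} (hX : P1 L X) : S.pP X ∨ S.pP (fun a => ¬ X a) := by
  obtain ⟨φ, hφ⟩ := hX
  rcases S.hp.1.2 φ with h | h
  · left
    refine ⟨⟨φ, hφ⟩, ?_⟩
    apply ((S.crit φ).mp h).subset
    rintro c ⟨hc, hn⟩
    refine ⟨hc, fun hr => hn ?_⟩
    simpa using (hφ ![c]).mp hr
  · right
    refine ⟨P1_not ⟨φ, hφ⟩, ?_⟩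
    apply ((S.crit _).mp h).subset
    rintro c ⟨hc, hn⟩
    refine ⟨hc, fun hr => hn (fun hx => ?_)⟩
    rw [Formula.realize_not] at hr
    exact hr ((hφ ![c]).mpr (by simpa using hx))

lemma K2 {X : M → Prop} (hX : S.pP X) {a : M} (ha : a ∈ S.pM) : X a := by
  obtain ⟨⟨φ, hφ⟩, hfin⟩ := hX
  have hφp : φ ∈ S.p := by
    rw [S.crit]
    apply hfin.subset
    rintro c ⟨hc, hn⟩
    refine ⟨hc, fun hXc => hn ((hφ ![c]).mpr (by simpa using hXc))⟩
  simpa using (hφ ![a]).mp (ha φ hφp)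

lemma K3 {X : M → Prop} (hX : P1 L X) {a : M} (ha : a ∈ S.pM) (hXa : X a) : S.pP X := by
  rcases S.K1 hX with h | h
  · exact h
  · exact absurd hXa (S.K2 h ha)

lemma pP_and {X Y : M → Prop} (hX : S.pP X) (hY : S.pP Y) : S.pP (fun a => X a ∧ Y a) := by
  refine ⟨P1_and hX.1 hY.1, ?_⟩
  apply (hX.2.union hY.2).subset
  rintro c ⟨hc, hn⟩
  rcases Classical.em (X c) with h | h
  · exact Or.inr ⟨hc, fun hy => hn ⟨h, hy⟩⟩
  · exact Or.inl ⟨hc, h⟩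

lemma pP_congr {X Y : M → Prop} (h : ∀ a, X a ↔ Y a) (hX : S.pP X) : S.pP Y := by
  refine ⟨P1_congr h hX.1, ?_⟩
  apply hX.2.subset
  rintro c ⟨hc, hn⟩
  exact ⟨hc, fun hy => hn ((h c).mp hy)⟩

/-- a finite nonempty subset of D has a maximum -/
lemma fin_max {T : Set M} (hfin : T.Finite) :
    T ⊆ S.DD → T.Nonempty → ∃ m ∈ T, ∀ z ∈ T, z = m ∨ S.lt' z m := by
  classical
  refine Set.Finite.induction_on
    (motive := fun T _ => T ⊆ S.DD → T.Nonempty → ∃ m ∈ T, ∀ z ∈ T, z = m ∨ S.lt' z m) T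
    hfin (fun _ hne => absurd hne (by simp)) ?_
  · intro x T hx hTfin ih hTD hne
    rcases Set.eq_empty_or_nonempty T with rfl | hTne
    · refine ⟨x, Set.mem_insert _ _, ?_⟩
      rintro z (rfl | hz)
      · exact Or.inl rfl
      · simp at hz
    · obtain ⟨m, hmT, hm⟩ := ih (fun t ht => hTD (Set.mem_insert_of_mem _ ht)) hTne
      rcases S.lt_total (hTD (Set.mem_insert _ _)) (hTD (Set.mem_insert_of_mem _ hmT)) with
        h | h | h
      · refine ⟨m, Set.mem_insert_of_mem _ hmT, ?_⟩
        rintro z (rfl | hz)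
        · exact Or.inl h
        · exact hm z hz
      · refine ⟨m, Set.mem_insert_of_mem _ hmT, ?_⟩
        rintro z (rfl | hz)
        · exact Or.inr h
        · exact hm z hz
      · refine ⟨x, Set.mem_insert _ _, ?_⟩
        rintro z (rfl | hz)
        · exact Or.inl rfl
        · rcases hm z hz with rfl | hzm
          · exact Or.inr h
          · exact Or.inr (S.lt_trans hzm h)

/-- a finite nonempty subset of D has a minimum -/
lemma fin_min {T : Set M} (hfin : T.Finite) :
    T ⊆ S.DD → T.Nonempty → ∃ m ∈ T, ∀ z ∈ T, z = m ∨ S.lt' m z := by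
  classical
  refine Set.Finite.induction_on
    (motive := fun T _ => T ⊆ S.DD → T.Nonempty → ∃ m ∈ T, ∀ z ∈ T, z = m ∨ S.lt' m z) T
    hfin (fun _ hne => absurd hne (by simp)) ?_
  · intro x T hx hTfin ih hTD hne
    rcases Set.eq_empty_or_nonempty T with rfl | hTne
    · refine ⟨x, Set.mem_insert _ _, ?_⟩
      rintro z (rfl | hz)
      · exact Or.inl rfl
      · simp at hz
    · obtain ⟨m, hmT, hm⟩ := ih (fun t ht => hTD (Set.mem_insert_of_mem _ ht)) hTne
      rcases S.lt_total (hTD (Set.mem_insert _ _)) (hTD (Set.mem_insert_of_mem _ hmT)) with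
        h | h | h
      · refine ⟨m, Set.mem_insert_of_mem _ hmT, ?_⟩
        rintro z (rfl | hz)
        · exact Or.inl h
        · exact hm z hz
      · refine ⟨x, Set.mem_insert _ _, ?_⟩
        rintro z (rfl | hz)
        · exact Or.inl rfl
        · rcases hm z hz with rfl | hzm
          · exact Or.inr h
          · exact Or.inr (S.lt_trans h hzm)
      · refine ⟨m, Set.mem_insert_of_mem _ hmT, ?_⟩
        rintro z (rfl | hz)
        · exact Or.inr h
        · exact hm z hz

/-- a nonempty subset of C has a minimum -/
lemma wf_min {T : Set M} (hTC : T ⊆ S.C) (hne : T.Nonempty) :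
    ∃ m ∈ T, ∀ z ∈ T, ¬ S.lt' z m := by
  obtain ⟨x, hx⟩ := hne
  have hT'fin : {z ∈ T | z = x ∨ S.lt' z x}.Finite := by
    apply Set.Finite.subset ((S.C_pred_finite (hTC hx)).union (Set.finite_singleton x))
    rintro z ⟨hzT, rfl | hlt⟩
    · exact Or.inr rfl
    · exact Or.inl ⟨hTC hzT, hlt⟩
  obtain ⟨m, ⟨hmT, hmx⟩, hm⟩ := S.fin_min hT'fin
    (fun z hz => S.C_sub_D (hTC hz.1)) ⟨x, hx, Or.inl rfl⟩
  refine ⟨m, hmT, fun z hzT hzm => ?_⟩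
  have hzx : z = x ∨ S.lt' z x := by
    rcases hmx with rfl | hmx
    · exact Or.inr hzm
    · exact Or.inr (S.lt_trans hzm hmx)
  rcases hm z ⟨hzT, hzx⟩ with rfl | h
  · exact S.lt_irrefl hzm
  · exact S.lt_asymm hzm h

lemma mem_pM_iff {a : M} : a ∈ S.pM ↔ ∀ φ ∈ S.p, φ.Realize (pval ![a]) := Iff.rfl

lemma pP_D : S.pP (· ∈ S.DD) := by
  refine ⟨S.PD, ?_⟩
  have : {c ∈ S.C | ¬ c ∈ S.DD} = ∅ := by
    ext c
    simp only [Set.mem_setOf_eq, Set.mem_empty_iff_false, iff_false, not_and, not_not]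
    exact fun hc => S.C_sub_D hc
  rw [this]
  exact Set.finite_empty

lemma pM_sub_D : S.pM ⊆ S.DD := fun _ ha => S.K2 S.pP_D ha

/-- every element of C is below every realization of p -/
lemma pP_gtC {c : M} (hc : c ∈ S.C) : S.pP (fun x => S.lt' c x) := by
  refine ⟨?_, ?_⟩
  · have h1 : P2 L (fun x y => y = c ∧ S.lt' y x) :=
      P2_and (P2_congr (fun a b => Iff.rfl) (P1_l2b (Psing (S.C_dcl hc)))) (P2_swap S.Plt)
    refine P1_congr (fun a => ?_) (P2_ex h1)
    constructor
    · rintro ⟨b, rfl, hb⟩; exact hb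
    · intro h; exact ⟨c, rfl, h⟩
  · apply (S.C_le_finite hc).subset
    rintro c' ⟨hc', hn⟩
    exact ⟨hc', hn⟩

lemma C_lt_pM {c a : M} (hc : c ∈ S.C) (ha : a ∈ S.pM) : S.lt' c a :=
  S.K2 (S.pP_gtC hc) ha

/-- no realization of p is definable over ∅ -/
lemma pM_not_dcl {a : M} (ha : a ∈ S.pM) (hd : a ∈ dclSet L (∅ : Set M)) : False := by
  have hP : P1 L (· = a) := Psing hd
  have h2 : S.pP (fun x => ¬ x = a) := by
    rcases S.K1 hP with h | h
    · exfalso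
      have hfin := h.2
      have : {c ∈ S.C | ¬ c = a} ⊇ S.C \ {a} := by
        rintro c ⟨hc, hca⟩
        exact ⟨hc, by simpa using hca⟩
      exact S.C_infinite (((hfin.union (Set.finite_singleton a)).subset) (by
        intro c hc
        rcases Classical.em (c = a) with rfl | hne
        · exact Or.inr rfl
        · exact Or.inl ⟨hc, hne⟩))
    · exact h
  exact S.K2 h2 ha rfl

/-- an element of D definable over ∅ but not in C lies above all realizations of p -/
lemma dcl_above {u : M} (hu : u ∈ dclSet L (∅ : Set M)) (huD : u ∈ S.DD) (huC : u ∉ S.C)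
    {a : M} (ha : a ∈ S.pM) : S.lt' a u := by
  have hP : S.pP (fun x => S.lt' x u) := by
    refine ⟨?_, ?_⟩
    · have h1 : P2 L (fun x y => y = u ∧ S.lt' x y) :=
        P2_and (P2_congr (fun a b => Iff.rfl) (P1_l2b (Psing hu))) S.Plt
      refine P1_congr (fun a => ?_) (P2_ex h1)
      constructor
      · rintro ⟨b, rfl, hb⟩; exact hb
      · intro h; exact ⟨u, rfl, h⟩
    · have : {c ∈ S.C | ¬ S.lt' c u} = ∅ := by
        ext c
        simp only [Set.mem_setOf_eq, Set.mem_empty_iff_false, iff_false, not_and, not_not]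
        intro hc
        rcases S.lt_total (S.C_sub_D hc) huD with heq | h | h
        · exact absurd (heq ▸ hc) huC
        · exact h
        · exact absurd (S.C_initial hc huD h) huC
      rw [this]
      exact Set.finite_empty
  exact S.K2 hP ha

/-- realizations of p exist -/
lemma pM_nonempty : S.pM.Nonempty := by
  have := S.hsat ∅ Set.countable_empty S.p S.hp.1.1
  exact this

/-- there is an element of C avoiding a given finite set -/
lemma exists_C_avoid {B : Set M} (hB : B.Finite) : ∃ c ∈ S.C, c ∉ B := by
  obtain ⟨c, hc⟩ := (S.C_infinite.diff hB).nonempty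
  exact ⟨c, hc.1, hc.2⟩

/-- there is an element of C above all C-elements of a given finite set -/
lemma exists_C_above {B : Set M} (hB : B.Finite) :
    ∃ cJ ∈ S.C, ∀ v ∈ B, v ∈ S.C → S.lt' v cJ := by
  have hfin : (⋃ v ∈ B ∩ S.C, {z ∈ S.C | ¬ S.lt' v z}).Finite := by
    apply Set.Finite.biUnion (hB.inter_of_left S.C)
    rintro v ⟨hvB, hvC⟩
    exact S.C_le_finite hvC
  obtain ⟨cJ, hcJ, hcJn⟩ := S.exists_C_avoid hfin
  refine ⟨cJ, hcJ, fun v hvB hvC => ?_⟩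
  by_contra hn
  exact hcJn (Set.mem_biUnion ⟨hvB, hvC⟩ ⟨hcJ, hn⟩)

/-- successor relation on D -/
def SuccR : M → M → Prop := fun x y => S.lt' x y ∧ ∀ z, S.lt' x z → z = y ∨ S.lt' y z

lemma P_SuccR : P2 L S.SuccR := by
  have h3 : P3 L (fun x y z => S.lt' x z → (z = y ∨ S.lt' y z)) := by
    have ha : P3 L (fun x y z : M => S.lt' x z) := by
      have := P2_l3 0 2 S.Plt
      exact P3_congr (fun a b c => by simp) this
    have hb : P3 L (fun x y z : M => z = y) := by
      have := P2_l3 2 1 (P2_eq (M := M) (L := L))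
      exact P3_congr (fun a b c => by simp) this
    have hcc : P3 L (fun x y z : M => S.lt' y z) := by
      have := P2_l3 1 2 S.Plt
      exact P3_congr (fun a b c => by simp) this
    refine P3_congr (fun a b c => ?_) (P3_or (P3_not ha) (P3_or hb hcc))
    constructor
    · rintro (h | h | h) hlt
      · exact absurd hlt h
      · exact Or.inl h
      · exact Or.inr h
    · intro h
      rcases Classical.em (S.lt' a c) with hlt | hlt
      · rcases h hlt with h1 | h1
        · exact Or.inr (Or.inl h1)
        · exact Or.inr (Or.inr h1)
      · exact Or.inl hlt
  exact P2_and S.Plt (P3_all h3)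

lemma SuccR_fun {x y y' : M} (h1 : S.SuccR x y) (h2 : S.SuccR x y') : y = y' := by
  rcases h1.2 y' h2.1 with h | h
  · exact h.symm
  · rcases h2.2 y h1.1 with h' | h'
    · exact h'
    · exact absurd (S.lt_trans h h') (S.lt_irrefl)

/-- every element of C has a successor, which is in C -/
lemma succ_C {c : M} (hc : c ∈ S.C) : ∃ y ∈ S.C, S.SuccR c y := by
  have hne : {z ∈ S.C | S.lt' c z}.Nonempty := by
    obtain ⟨z, hz, hzn⟩ := S.exists_C_avoid ((S.C_le_finite hc))
    refine ⟨z, hz, ?_⟩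
    by_contra hn
    exact hzn ⟨hz, hn⟩
  obtain ⟨m, ⟨hmC, hcm⟩, hm⟩ := S.wf_min (fun z hz => hz.1) hne
  refine ⟨m, hmC, hcm, fun z hz => ?_⟩
  rcases S.lt_total (S.lt_D hz).2 (S.C_sub_D hmC) with h | h | h
  · exact Or.inl h
  · exfalso
    have hzC : z ∈ S.C := S.C_initial hmC (S.lt_D hz).2 h
    exact hm z ⟨hzC, hz⟩ h
  · exact Or.inr h

lemma f_pM {a : M} (ha : a ∈ S.pM) : S.f a ∈ S.pM :=
  ((S.hgraph a (S.f a)).mpr ⟨ha, rfl⟩).2.1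

lemma th_f {a : M} (ha : a ∈ S.pM) : defRel (∅ : Set M) S.th a (S.f a) :=
  ((S.hgraph a (S.f a)).mpr ⟨ha, rfl⟩).2.2

lemma f_eq {a b : M} (ha : a ∈ S.pM) (hb : b ∈ S.pM) (hth : defRel (∅ : Set M) S.th a b) :
    S.f a = b :=
  ((S.hgraph a b).mp ⟨ha, hb, hth⟩).2

lemma pP_succ_exists : S.pP (fun x => ∃ y, S.SuccR x y) := by
  refine ⟨P2_ex S.P_SuccR, ?_⟩
  have : {c ∈ S.C | ¬ ∃ y, S.SuccR c y} = ∅ := by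
    ext c
    simp only [Set.mem_setOf_eq, Set.mem_empty_iff_false, iff_false, not_and, not_not]
    intro hc
    obtain ⟨y, _, hy⟩ := S.succ_C hc
    exact ⟨y, hy⟩
  rw [this]
  exact Set.finite_empty

/-- pP for a conjunction given by a list of p-formulas -/
lemma pP_list {l : List (L.Formula (↥(∅ : Set M) ⊕ Fin 1))} (hl : ∀ ψ ∈ l, ψ ∈ S.p) :
    S.pP (fun y => ∀ ψ ∈ l, ψ.Realize (pval ![y])) := by
  refine ⟨?_, ?_⟩
  · refine P1_congr (fun a => ?_) (Pp (conjList l))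
    exact realize_conjList l (pval ![a])
  · have hsub : {c ∈ S.C | ¬ ∀ ψ ∈ l, ψ.Realize (pval ![c])} ⊆
        ⋃ ψ ∈ {ψ | ψ ∈ l}, {c ∈ S.C | ¬ ψ.Realize (pval ![c])} := by
      rintro c ⟨hc, hn⟩
      push_neg at hn
      obtain ⟨ψ, hψl, hψn⟩ := hn
      exact Set.mem_biUnion hψl ⟨hc, hψn⟩
    apply Set.Finite.subset _ hsub
    apply Set.Finite.biUnion l.finite_toSet
    intro ψ hψ
    exact (S.crit ψ).mp (hl ψ hψ)

/-- The fundamental construction: a ∅-definable partial function agreeing with f on p(M). -/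
lemma exists_F : ∃ Fd : M → M → Prop, P2 L Fd ∧
    (∀ x y y', Fd x y → Fd x y' → y = y') ∧
    (∀ a ∈ S.pM, Fd a (S.f a)) ∧
    (∀ a ∈ S.pM, ∀ y, Fd a y → y = S.f a) ∧
    S.pP (fun x => ∃ y, Fd x y) := by
  classical
  obtain ⟨a₀, ha₀⟩ := S.pM_nonempty
  set A : Set M := {a₀, S.f a₀} with hA
  have ha₀A : a₀ ∈ A := Set.mem_insert _ _
  have hfa₀A : S.f a₀ ∈ A := Set.mem_insert_of_mem _ rfl
  have hR3 : P3 L (fun y b c => defRel (∅ : Set M) S.th b y ∧ ¬ y = c) := by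
    have h1 : P3 L (fun y b c : M => defRel (∅ : Set M) S.th b y) := by
      have := P2_l3 1 0 S.Pth
      exact P3_congr (fun a b c => by simp) this
    have h2 : P3 L (fun y b c : M => y = c) := by
      have := P2_l3 0 2 (P2_eq (M := M) (L := L))
      exact P3_congr (fun a b c => by simp) this
    exact P3_and h1 (P3_not h2)
  obtain ⟨ξ, hξ⟩ := param2_formula hR3 A a₀ (S.f a₀) ha₀A hfa₀A
  set q : Set (L.Formula (↥A ⊕ Fin 1)) := (relabel1 A '' S.p) ∪ {ξ} with hq
  have hnr : ¬ (typeSet A q).Nonempty := by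
    rintro ⟨y, hy⟩
    have hyp : y ∈ S.pM := by
      intro φ hφ
      have := hy (relabel1 A φ) (Or.inl ⟨φ, hφ, rfl⟩)
      exact (realize_relabel1 A φ y).mp this
    have hξy := hy ξ (Or.inr rfl)
    rw [hξ y] at hξy
    exact hξy.2 (S.f_eq ha₀ hyp hξy.1).symm
  have hnfs : ¬ FinSat A q := by
    intro hfs
    exact hnr (S.hsat A ((Set.finite_singleton _).insert _).countable q hfs)
  rw [FinSat] at hnfs
  push_neg at hnfs
  obtain ⟨s, hs_sub, hs_unsat⟩ := hnfs
  obtain ⟨l, hl1, hl2⟩ := exists_origins s (relabel1 A) S.p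
  set Ψ : M → Prop := fun y => ∀ ψ ∈ l, ψ.Realize (pval ![y]) with hΨ
  have hΨpP : S.pP Ψ := S.pP_list hl1
  have hkey : ∀ y, Ψ y → defRel (∅ : Set M) S.th a₀ y → y = S.f a₀ := by
    intro y hΨy hθy
    by_contra hne
    obtain ⟨φ', hφ's, hφ'n⟩ := hs_unsat ![y]
    apply hφ'n
    clear hφ'n
    rcases hs_sub hφ's with ⟨ψ, hψp, rfl⟩ | hφξ
    · have : ∃ ψ' ∈ l, relabel1 A ψ' = relabel1 A ψ := hl2 _ hφ's ⟨ψ, hψp, rfl⟩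
      obtain ⟨ψ', hψ'l, hψ'eq⟩ := this
      have := hΨy ψ' hψ'l
      have h2 := (realize_relabel1 A ψ' y).mpr this
      rw [hψ'eq] at h2
      exact h2
    · rw [Set.mem_singleton_iff.mp hφξ, hξ y]
      exact ⟨hθy, hne⟩
  set R0 : M → M → Prop := fun x y => defRel (∅ : Set M) S.th x y ∧ Ψ y with hR0
  have hR0P : P2 L R0 := P2_and S.Pth (P1_l2b hΨpP.1)
  have hEP : P1 L (fun x => ∀ y, ∀ y', R0 x y → R0 x y' → y = y') := by
    have h3 : P3 L (fun x y y' => R0 x y → R0 x y' → y = y') := by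
      have hA' : P3 L (fun x y y' : M => R0 x y) := by
        have := P2_l3 0 1 hR0P
        exact P3_congr (fun a b c => by simp) this
      have hB : P3 L (fun x y y' : M => R0 x y') := by
        have := P2_l3 0 2 hR0P
        exact P3_congr (fun a b c => by simp) this
      have hC : P3 L (fun x y y' : M => y = y') := by
        have := P2_l3 1 2 (P2_eq (M := M) (L := L))
        exact P3_congr (fun a b c => by simp) this
      refine P3_congr (fun a b c => ?_) (P3_or (P3_not hA') (P3_or (P3_not hB) hC))
      constructor
      · rintro (h | h | h) h1 h2
        · exact absurd h1 h
        · exact absurd h2 h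
        · exact h
      · intro h
        rcases Classical.em (R0 a b) with h1 | h1
        · rcases Classical.em (R0 a c) with h2 | h2
          · exact Or.inr (Or.inr (h h1 h2))
          · exact Or.inr (Or.inl h2)
        · exact Or.inl h1
    refine P1_congr (fun a => ?_) (P2_all (P3_all h3))
    rfl
  have hEa₀ : ∀ y y', R0 a₀ y → R0 a₀ y' → y = y' := by
    intro y y' h1 h2
    rw [hkey y h1.2 h1.1, hkey y' h2.2 h2.1]
  have hEpP : S.pP (fun x => ∀ y, ∀ y', R0 x y → R0 x y' → y = y') :=
    S.K3 hEP ha₀ hEa₀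
  set Fd : M → M → Prop := fun x y => R0 x y ∧ ∀ y', R0 x y' → y' = y with hFd
  have hFdP : P2 L Fd := by
    refine P2_and hR0P ?_
    have h3 : P3 L (fun x y y' => R0 x y' → y' = y) := by
      have hB : P3 L (fun x y y' : M => R0 x y') := by
        have := P2_l3 0 2 hR0P
        exact P3_congr (fun a b c => by simp) this
      have hC : P3 L (fun x y y' : M => y' = y) := by
        have := P2_l3 2 1 (P2_eq (M := M) (L := L))
        exact P3_congr (fun a b c => by simp) this
      refine P3_congr (fun a b c => ?_) (P3_or (P3_not hB) hC)
      constructor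
      · rintro (h | h) h1
        · exact absurd h1 h
        · exact h
      · intro h
        rcases Classical.em (R0 a c) with h1 | h1
        · exact Or.inr (h h1)
        · exact Or.inl h1
    exact P3_all h3
  have hfa : ∀ a ∈ S.pM, Fd a (S.f a) := by
    intro a ha
    have hR0a : R0 a (S.f a) := ⟨S.th_f ha, S.K2 hΨpP (S.f_pM ha)⟩
    refine ⟨hR0a, fun y' hy' => S.K2 hEpP ha y' (S.f a) hy' hR0a⟩
  refine ⟨Fd, hFdP, ?_, hfa, ?_, ?_⟩
  · intro x y y' h1 h2
    exact (h1.2 y' h2.1).symm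
  · intro a ha y hy
    exact (hfa a ha).2 y hy.1
  · apply S.K3 (P2_ex hFdP) ha₀
    exact ⟨S.f a₀, hfa a₀ ha₀⟩

section WithF

variable {Fd : M → M → Prop}

/-- Fd applied to a dcl constant, as a definable set -/
lemma P1_Fd_const (hFdP : P2 L Fd) {v : M} (hv : v ∈ dclSet L (∅ : Set M)) :
    P1 L (fun x => Fd x v) := by
  have h := P2_ex (P2_and hFdP (P2_congr (fun a b => Iff.rfl)
    (P1_l2b (Psing (M := M) hv))))
  refine P1_congr (fun a => ?_) h
  constructor
  · rintro ⟨w, hw, rfl⟩; exact hw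
  · intro h'; exact ⟨v, h', rfl⟩

lemma P1_gtc {c : M} (hc : c ∈ dclSet L (∅ : Set M)) : P1 L (fun x => S.lt' c x) := by
  have h1 : P2 L (fun x y => y = c ∧ S.lt' y x) :=
    P2_and (P2_congr (fun a b => Iff.rfl) (P1_l2b (Psing (M := M) hc))) (P2_swap S.Plt)
  refine P1_congr (fun a => ?_) (P2_ex h1)
  constructor
  · rintro ⟨b, rfl, hb⟩; exact hb
  · intro h; exact ⟨c, rfl, h⟩

lemma P1_ltc {c : M} (hc : c ∈ dclSet L (∅ : Set M)) : P1 L (fun x => S.lt' x c) := by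
  have h1 : P2 L (fun x y => y = c ∧ S.lt' x y) :=
    P2_and (P2_congr (fun a b => Iff.rfl) (P1_l2b (Psing (M := M) hc))) S.Plt
  refine P1_congr (fun a => ?_) (P2_ex h1)
  constructor
  · rintro ⟨b, rfl, hb⟩; exact hb
  · intro h; exact ⟨c, rfl, h⟩

variable (hFdP : P2 L Fd)
  (hfun : ∀ x y y', Fd x y → Fd x y' → y = y')
  (hfa : ∀ a ∈ S.pM, Fd a (S.f a))
  (huni : ∀ a ∈ S.pM, ∀ y, Fd a y → y = S.f a)
  (hEx : S.pP (fun x => ∃ y, Fd x y))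

include hFdP hfun hfa huni hEx

/-- the image under Fd is in D, cofinitely on C -/
lemma pP_imgD : S.pP (fun x => ∀ y, Fd x y → y ∈ S.DD) := by
  obtain ⟨a₀, ha₀⟩ := S.pM_nonempty
  have hP : P1 L (fun x => ∀ y, Fd x y → y ∈ S.DD) := by
    have h2 : P2 L (fun x y => Fd x y → y ∈ S.DD) := by
      refine P2_congr (fun a b => ?_) (P2_or (P2_not hFdP) (P1_l2b S.PD))
      constructor
      · rintro (h | h) h1
        · exact absurd h1 h
        · exact h
      · intro h
        rcases Classical.em (Fd a b) with h1 | h1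
        · exact Or.inr (h h1)
        · exact Or.inl h1
    exact P2_all h2
  apply S.K3 hP ha₀
  intro y hy
  rw [huni a₀ ha₀ y hy]
  exact S.pM_sub_D (S.f_pM ha₀)

/-- the image under Fd is above any given element of C, cofinitely on C -/
lemma pP_imgGt {c : M} (hc : c ∈ S.C) : S.pP (fun x => ∃ y, Fd x y ∧ S.lt' c y) := by
  obtain ⟨a₀, ha₀⟩ := S.pM_nonempty
  have hP : P1 L (fun x => ∃ y, Fd x y ∧ S.lt' c y) :=
    P2_ex (P2_and hFdP (P2_congr (fun a b => Iff.rfl) (P1_l2b (S.P1_gtc (S.C_dcl hc)))))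
  apply S.K3 hP ha₀
  exact ⟨S.f a₀, hfa a₀ ha₀, S.C_lt_pM hc (S.f_pM ha₀)⟩

/-- sign trichotomy -/
lemma sign_cases :
    S.pP (fun x => ∃ y, Fd x y ∧ S.lt' x y) ∨
    S.pP (fun x => ∃ y, Fd x y ∧ y = x) ∨
    S.pP (fun x => ∃ y, Fd x y ∧ S.lt' y x) := by
  obtain ⟨a₀, ha₀⟩ := S.pM_nonempty
  have hPgt : P1 L (fun x => ∃ y, Fd x y ∧ S.lt' x y) :=
    P2_ex (P2_and hFdP S.Plt)
  have hPeq : P1 L (fun x => ∃ y, Fd x y ∧ y = x) :=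
    P2_ex (P2_and hFdP (P2_swap (P2_eq (M := M) (L := L))))
  have hPlt : P1 L (fun x => ∃ y, Fd x y ∧ S.lt' y x) :=
    P2_ex (P2_and hFdP (P2_swap S.Plt))
  rcases S.lt_total (S.pM_sub_D (S.f_pM ha₀)) (S.pM_sub_D ha₀) with h | h | h
  · exact Or.inr (Or.inl (S.K3 hPeq ha₀ ⟨S.f a₀, hfa a₀ ha₀, h⟩))
  · exact Or.inr (Or.inr (S.K3 hPlt ha₀ ⟨S.f a₀, hfa a₀ ha₀, h⟩))
  · exact Or.inl (S.K3 hPgt ha₀ ⟨S.f a₀, hfa a₀ ha₀, h⟩)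

/-- transfer: cofinitely many points are Fd-images of points satisfying Φ -/
lemma sigma_img {Φ : M → Prop} (hΦ : S.pP Φ) : S.pP (fun y => ∃ x, Φ x ∧ Fd x y) := by
  obtain ⟨a₀, ha₀⟩ := S.pM_nonempty
  have hP : P1 L (fun y => ∃ x, Φ x ∧ Fd x y) :=
    P2_ex (P2_and (P1_l2b hΦ.1) (P2_swap hFdP))
  apply S.K3 hP (S.f_pM ha₀)
  exact ⟨a₀, S.K2 hΦ ha₀, hfa a₀ ha₀⟩

/-- surjectivity of f on p(M) -/
lemma surj : ∀ b ∈ S.pM, ∃ a ∈ S.pM, S.f a = b := by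
  classical
  intro b hb
  obtain ⟨ξ, hξ⟩ := param1_formula hFdP {b} b rfl
  set q : Set (L.Formula (↥({b} : Set M) ⊕ Fin 1)) := (relabel1 {b} '' S.p) ∪ {ξ} with hq
  have hfs : FinSat ({b} : Set M) q := by
    intro s hs_sub
    obtain ⟨l, hl1, hl2⟩ := exists_origins s (relabel1 ({b} : Set M)) S.p
    have hW := sigma_img S hFdP hfun hfa huni hEx (S.pP_list hl1)
    obtain ⟨x, hxΦ, hxFd⟩ := S.K2 hW hb
    refine ⟨![x], fun φ' hφ's => ?_⟩
    rcases hs_sub hφ's with ⟨ψ, hψp, rfl⟩ | hφξ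
    · obtain ⟨ψ', hψ'l, hψ'eq⟩ := hl2 _ hφ's ⟨ψ, hψp, rfl⟩
      have h2 := (realize_relabel1 ({b} : Set M) ψ' x).mpr (hxΦ ψ' hψ'l)
      rw [hψ'eq] at h2
      exact h2
    · rw [Set.mem_singleton_iff.mp hφξ, hξ x]
      exact hxFd
  obtain ⟨a, ha⟩ := S.hsat {b} (Set.countable_singleton b) q hfs
  have hapM : a ∈ S.pM := by
    intro φ hφ
    exact (realize_relabel1 _ φ a).mp (ha (relabel1 _ φ) (Or.inl ⟨φ, hφ, rfl⟩))
  have hFdab : Fd a b := (hξ a).mp (ha ξ (Or.inr rfl))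
  exact ⟨a, hapM, (huni a hapM b hFdab).symm⟩

/-- transfer of a bad pair -/
lemma bad_transfer
    (hbad : ∃ a ∈ S.pM, ∃ b ∈ S.pM, S.lt' a b ∧ (S.f b = S.f a ∨ S.lt' (S.f b) (S.f a)))
    {Φ : M → Prop} (hΦ : S.pP Φ) :
    S.pP (fun y => ∃ x u v, Φ x ∧ S.lt' x y ∧ Fd x u ∧ Fd y v ∧ (v = u ∨ S.lt' v u)) := by
  obtain ⟨a, ha, b, hb, hab, hbad'⟩ := hbad
  have hP : P1 L (fun y => ∃ x u v, Φ x ∧ S.lt' x y ∧ Fd x u ∧ Fd y v ∧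
      (v = u ∨ S.lt' v u)) := by
    have h4 : P4 L (fun y x u v => Φ x ∧ S.lt' x y ∧ Fd x u ∧ Fd y v ∧
        (v = u ∨ S.lt' v u)) := by
      have k1 : P4 L (fun y x u v : M => Φ x) := by
        have := P1_l4 1 hΦ.1
        exact Dn_congr (fun vv => by simp) this
      have k2 : P4 L (fun y x u v : M => S.lt' x y) := by
        have := P2_l4 1 0 S.Plt
        exact Dn_congr (fun vv => by simp) this
      have k3 : P4 L (fun y x u v : M => Fd x u) := by
        have := P2_l4 1 2 hFdP
        exact Dn_congr (fun vv => by simp) this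
      have k4 : P4 L (fun y x u v : M => Fd y v) := by
        have := P2_l4 0 3 hFdP
        exact Dn_congr (fun vv => by simp) this
      have k5 : P4 L (fun y x u v : M => v = u) := by
        have := P2_l4 3 2 (P2_eq (M := M) (L := L))
        exact Dn_congr (fun vv => by simp) this
      have k6 : P4 L (fun y x u v : M => S.lt' v u) := by
        have := P2_l4 3 2 S.Plt
        exact Dn_congr (fun vv => by simp) this
      exact P4_and k1 (P4_and k2 (P4_and k3 (P4_and k4 (Dn_or k5 k6))))
    exact P2_ex (P3_ex (P4_ex h4))
  apply S.K3 hP hb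
  refine ⟨a, S.f a, S.f b, S.K2 hΦ ha, hab, hfa a ha, hfa b hb, ?_⟩
  rcases hbad' with h | h
  · exact Or.inl h
  · exact Or.inr h

/-- transfer: in the increasing case, cofinitely many points of C are images
of earlier points of C -/
lemma sigma_lt (hsign : S.pP (fun x => ∃ y, Fd x y ∧ S.lt' x y)) {Φ : M → Prop}
    (hΦ : S.pP Φ) : S.pP (fun y => ∃ x, Φ x ∧ S.lt' x y ∧ Fd x y) := by
  obtain ⟨a₀, ha₀⟩ := S.pM_nonempty
  have hP : P1 L (fun y => ∃ x, Φ x ∧ S.lt' x y ∧ Fd x y) :=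
    P2_ex (P2_and (P1_l2b hΦ.1) (P2_and (P2_swap S.Plt) (P2_swap hFdP)))
  apply S.K3 hP (S.f_pM ha₀)
  obtain ⟨y, hy, hlt⟩ := S.K2 hsign ha₀
  have hyy : y = S.f a₀ := huni a₀ ha₀ y hy
  subst hyy
  exact ⟨a₀, S.K2 hΦ ha₀, hlt, hy⟩

lemma sigma_lt_C (hsign : S.pP (fun x => ∃ y, Fd x y ∧ S.lt' x y)) {cJ : M}
    (hcJ : cJ ∈ S.C) : ∃ x ∈ S.C, S.lt' cJ x ∧ ∃ c ∈ S.C, Fd x c := by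
  have hΦ : S.pP (fun x => x ∈ S.DD ∧ S.lt' cJ x) := S.pP_and S.pP_D (S.pP_gtC hcJ)
  have hW := sigma_lt S hFdP hfun hfa huni hEx hsign hΦ
  obtain ⟨c, hcC, hcW⟩ := S.exists_C_avoid hW.2
  have hWc : ∃ x, (x ∈ S.DD ∧ S.lt' cJ x) ∧ S.lt' x c ∧ Fd x c := by
    by_contra hn
    exact hcW ⟨hcC, hn⟩
  obtain ⟨x, ⟨hxD, hcJx⟩, hxc, hFxc⟩ := hWc
  exact ⟨x, S.C_initial hcC hxD hxc, hcJx, c, hcC, hFxc⟩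

/-- given a bad pair, produce an element of C whose image is above all of C -/
lemma exists_big_e
    (hbad : ∃ a ∈ S.pM, ∃ b ∈ S.pM, S.lt' a b ∧ (S.f b = S.f a ∨ S.lt' (S.f b) (S.f a)))
    {Φ : M → Prop} (hΦ : S.pP Φ)
    (hΦ₀ : ∀ x, Φ x → x ∈ S.DD ∧ (∃ y, Fd x y) ∧ (∀ y, Fd x y → y ∈ S.DD)) :
    ∃ e ∈ S.C, Φ e ∧ ∃ u, Fd e u ∧ u ∉ S.C := by
  classical
  have hW := bad_transfer S hFdP hfun hfa huni hEx hbad hΦ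
  set W : M → Prop :=
    fun y => ∃ x u v, Φ x ∧ S.lt' x y ∧ Fd x u ∧ Fd y v ∧ (v = u ∨ S.lt' v u) with hWdef
  have descent : ∀ c₁ ∈ S.C, Φ c₁ → ∃ e ∈ S.C, ¬ W e ∧ Φ e ∧
      (∀ u v, Fd e u → Fd c₁ v → (u = v ∨ S.lt' v u)) := by
    intro c₁ hc₁ hΦc₁
    set T := {e ∈ S.C | Φ e ∧ ∀ u v, Fd e u → Fd c₁ v → (u = v ∨ S.lt' v u)} with hT
    have hc₁T : c₁ ∈ T := ⟨hc₁, hΦc₁, fun u v h1 h2 => Or.inl (hfun _ _ _ h1 h2)⟩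
    obtain ⟨m, hmT, hmmin⟩ := S.wf_min (T := T) (fun z hz => hz.1) ⟨c₁, hc₁T⟩
    refine ⟨m, hmT.1, ?_, hmT.2.1, hmT.2.2⟩
    intro hWm
    obtain ⟨x, u, v, hΦx, hxm, hFxu, hFmv, hvu⟩ := hWm
    have hxC : x ∈ S.C := S.C_initial hmT.1 (hΦ₀ x hΦx).1 hxm
    have hxT : x ∈ T := by
      refine ⟨hxC, hΦx, fun u' v' h1 h2 => ?_⟩
      have huu : u' = u := hfun _ _ _ h1 hFxu
      subst huu
      rcases hmT.2.2 v v' hFmv h2 with heq | hlt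
      · rcases hvu with h | h
        · exact Or.inl (h ▸ heq)
        · exact Or.inr (heq ▸ h)
      · rcases hvu with h | h
        · subst h
          exact Or.inr hlt
        · exact Or.inr (S.lt_trans hlt h)
    exact hmmin x hxT hxm
  have cover : ∀ c' ∈ S.C, ∃ e, (e ∈ S.C ∧ ¬ W e ∧ Φ e) ∧ ∃ u, Fd e u ∧ S.lt' c' u := by
    intro c' hc'
    have hgood : S.pP (fun x => Φ x ∧ ∃ y, Fd x y ∧ S.lt' c' y) :=
      S.pP_and hΦ (pP_imgGt S hFdP hfun hfa huni hEx hc')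
    obtain ⟨c₁, hc₁C, hc₁n⟩ := S.exists_C_avoid hgood.2
    have hc₁good : Φ c₁ ∧ ∃ y, Fd c₁ y ∧ S.lt' c' y := by
      by_contra hn
      exact hc₁n ⟨hc₁C, hn⟩
    obtain ⟨hΦc₁, y, hFy, hc'y⟩ := hc₁good
    obtain ⟨e, heC, hWe, hΦe, hcomp⟩ := descent c₁ hc₁C hΦc₁
    obtain ⟨u, hu⟩ := (hΦ₀ e hΦe).2.1
    refine ⟨e, ⟨heC, hWe, hΦe⟩, u, hu, ?_⟩
    rcases hcomp u y hu hFy with heq | hlt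
    · exact heq ▸ hc'y
    · exact S.lt_trans hc'y hlt
  -- pigeonhole over the finite exceptional set
  set EWΦ := {e : M | e ∈ S.C ∧ ¬ W e ∧ Φ e} with hEWΦ
  have hEWΦfin : EWΦ.Finite := by
    apply hW.2.subset
    rintro e ⟨h1, h2, _⟩
    exact ⟨h1, h2⟩
  have hsub : S.C ⊆ ⋃ e ∈ EWΦ, {c' ∈ S.C | ∃ u, Fd e u ∧ S.lt' c' u} := by
    intro c' hc'
    obtain ⟨e, he, u, hu, hlt⟩ := cover c' hc'
    exact Set.mem_biUnion he ⟨hc', u, hu, hlt⟩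
  have hexinf : ∃ e ∈ EWΦ, {c' ∈ S.C | ∃ u, Fd e u ∧ S.lt' c' u}.Infinite := by
    by_contra hn
    push_neg at hn
    exact S.C_infinite ((Set.Finite.biUnion hEWΦfin hn).subset hsub)
  obtain ⟨e, heEWΦ, hinf⟩ := hexinf
  obtain ⟨c'₀, hc'₀⟩ := hinf.nonempty
  obtain ⟨u₀, hu₀, _⟩ := hc'₀.2
  refine ⟨e, heEWΦ.1, heEWΦ.2.2, u₀, hu₀, fun hu₀C => ?_⟩
  apply hinf
  apply (S.C_pred_finite hu₀C).subset
  rintro c' ⟨hc'C, u, hu, hlt⟩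
  have : u = u₀ := hfun _ _ _ hu hu₀
  subst this
  exact ⟨hc'C, hlt⟩

/-- the decreasing case is impossible (given a bad pair) -/
lemma case_lt (hsign : S.pP (fun x => ∃ y, Fd x y ∧ S.lt' y x))
    (hbad : ∃ a ∈ S.pM, ∃ b ∈ S.pM, S.lt' a b ∧ (S.f b = S.f a ∨ S.lt' (S.f b) (S.f a))) :
    False := by
  classical
  have hΦ₀pP : S.pP (fun x => x ∈ S.DD ∧ (∃ y, Fd x y) ∧ (∀ y, Fd x y → y ∈ S.DD)) :=
    S.pP_and S.pP_D (S.pP_and hEx (pP_imgD S hFdP hfun hfa huni hEx))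
  have step : ∀ e₀, e₀ ∈ S.C → ∃ e, e ∈ S.C ∧ S.lt' e₀ e ∧ ∃ u, Fd e u ∧ u ∉ S.C := by
    intro e₀ he₀
    have hΦ : S.pP (fun x => (x ∈ S.DD ∧ (∃ y, Fd x y) ∧ (∀ y, Fd x y → y ∈ S.DD)) ∧
        S.lt' e₀ x) := S.pP_and hΦ₀pP (S.pP_gtC he₀)
    obtain ⟨e, heC, hΦe, u, hu, huC⟩ :=
      exists_big_e S hFdP hfun hfa huni hEx hbad hΦ (fun x hx => hx.1)
    exact ⟨e, heC, hΦe.2, u, hu, huC⟩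
  obtain ⟨c0, hc0⟩ := S.C_infinite.nonempty
  choose g hg1 hg2 hg3 using step
  let E : ℕ → {x : M // x ∈ S.C} := fun n =>
    Nat.rec ⟨c0, hc0⟩ (fun _ prev => ⟨g prev.1 prev.2, hg1 prev.1 prev.2⟩) n
  have hEstep : ∀ n, S.lt' (E n).1 (E (n + 1)).1 := fun n => hg2 _ _
  have hEbig : ∀ n, ∃ u, Fd (E (n + 1)).1 u ∧ u ∉ S.C := fun n => hg3 _ _
  have hmem : ∀ n, (E (n + 1)).1 ∈ {c ∈ S.C | ¬ ∃ y, Fd c y ∧ S.lt' y c} := by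
    intro n
    refine ⟨(E (n + 1)).2, ?_⟩
    rintro ⟨y, hy, hylt⟩
    obtain ⟨u, hu, huC⟩ := hEbig n
    have heq : y = u := hfun _ _ _ hy hu
    subst heq
    exact huC (S.C_initial (E (n + 1)).2 (S.lt_D hylt).1 hylt)
  have hmono : ∀ n m : ℕ, n < m → S.lt' (E n).1 (E m).1 := by
    intro n m h
    induction m with
    | zero => exact absurd h (Nat.not_lt_zero n)
    | succ m ih =>
        rcases Nat.lt_succ_iff_lt_or_eq.mp h with h' | h'
        · exact S.lt_trans (ih h') (hEstep m)
        · exact h' ▸ hEstep m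
  have hinj : Function.Injective (fun n : ℕ => (E (n + 1)).1) := by
    intro n m hnm
    by_contra hne
    have hnm' : (E (n + 1)).1 = (E (m + 1)).1 := hnm
    rcases Nat.lt_or_ge n m with h | h
    · exact S.lt_irrefl (hnm' ▸ hmono (n + 1) (m + 1) (by omega))
    · have h' : m < n := by omega
      exact S.lt_irrefl (hnm'.symm ▸ hmono (m + 1) (n + 1) (by omega))
  exact (Set.infinite_of_injective_forall_mem hinj hmem) hsign.2

/-- the R-set: F is increasing at the successor step -/
lemma P1_Rset : P1 L (fun x => ∃ y u v, S.SuccR x y ∧ Fd x u ∧ Fd y v ∧ S.lt' u v) := by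
  have h4 : P4 L (fun x y u v => S.SuccR x y ∧ Fd x u ∧ Fd y v ∧ S.lt' u v) := by
    have k1 : P4 L (fun x y u v : M => S.SuccR x y) := by
      have := P2_l4 0 1 S.P_SuccR
      exact Dn_congr (fun vv => by simp) this
    have k2 : P4 L (fun x y u v : M => Fd x u) := by
      have := P2_l4 0 2 hFdP
      exact Dn_congr (fun vv => by simp) this
    have k3 : P4 L (fun x y u v : M => Fd y v) := by
      have := P2_l4 1 3 hFdP
      exact Dn_congr (fun vv => by simp) this
    have k4 : P4 L (fun x y u v : M => S.lt' u v) := by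
      have := P2_l4 2 3 S.Plt
      exact Dn_congr (fun vv => by simp) this
    exact P4_and k1 (P4_and k2 (P4_and k3 k4))
  exact P2_ex (P3_ex (P4_ex h4))

/-- eventual monotonicity on C in the R case -/
lemma mono_tail (hR : S.pP (fun x => ∃ y u v, S.SuccR x y ∧ Fd x u ∧ Fd y v ∧ S.lt' u v)) :
    ∃ cJ ∈ S.C, ∀ c' ∈ S.C, ∀ c ∈ S.C, S.lt' cJ c → S.lt' c c' →
      ∀ u v, Fd c u → Fd c' v → S.lt' u v := by
  classical
  obtain ⟨cJ, hcJC, hcJab⟩ := S.exists_C_above hR.2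
  refine ⟨cJ, hcJC, ?_⟩
  have good : ∀ z ∈ S.C, S.lt' cJ z →
      ∃ y u v, S.SuccR z y ∧ Fd z u ∧ Fd y v ∧ S.lt' u v := by
    intro z hz hcJz
    by_contra hn
    exact S.lt_asymm hcJz (hcJab z ⟨hz, hn⟩ hz)
  by_contra hn
  push_neg at hn
  set T := {c' ∈ S.C | ∃ c ∈ S.C, S.lt' cJ c ∧ S.lt' c c' ∧
    ∃ u v, Fd c u ∧ Fd c' v ∧ ¬ S.lt' u v} with hT
  have hTne : T.Nonempty := by
    obtain ⟨c', hc'C, c, hcC, h1, h2, u, v, h3, h4, h5⟩ := hn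
    exact ⟨c', hc'C, c, hcC, h1, h2, u, v, h3, h4, h5⟩
  obtain ⟨m, hmT, hmmin⟩ := S.wf_min (T := T) (fun z hz => hz.1) hTne
  obtain ⟨hmC, c, hcC, hcJc, hcm, u, v, hFcu, hFmv, hnuv⟩ := hmT
  -- maximal predecessor of m that is ≥ c
  set P := {z ∈ S.C | S.lt' z m ∧ (z = c ∨ S.lt' c z)} with hP
  have hPfin : P.Finite := (S.C_pred_finite hmC).subset (fun z hz => ⟨hz.1, hz.2.1⟩)
  obtain ⟨m', hm'P, hm'max⟩ := S.fin_max hPfin (fun z hz => S.C_sub_D hz.1)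
    ⟨c, hcC, hcm, Or.inl rfl⟩
  have hm'C : m' ∈ S.C := hm'P.1
  have hm'm : S.lt' m' m := hm'P.2.1
  have hcm' : m' = c ∨ S.lt' c m' := hm'P.2.2
  have hcJm' : S.lt' cJ m' := by
    rcases hcm' with rfl | h
    · exact hcJc
    · exact S.lt_trans hcJc h
  have hsucc : S.SuccR m' m := by
    refine ⟨hm'm, fun z hz => ?_⟩
    rcases S.lt_total (S.lt_D hz).2 (S.C_sub_D hmC) with h | h | h
    · exact Or.inl h
    · exfalso
      have hzC : z ∈ S.C := S.C_initial hmC (S.lt_D hz).2 h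
      have hzP : z ∈ P := by
        refine ⟨hzC, h, ?_⟩
        rcases hcm' with rfl | h'
        · exact Or.inr hz
        · exact Or.inr (S.lt_trans h' hz)
      rcases hm'max z hzP with rfl | h'
      · exact S.lt_irrefl hz
      · exact S.lt_asymm hz h'
    · exact Or.inr h
  obtain ⟨y, u', v', hy, hFm'u', hFyv', hu'v'⟩ := good m' hm'C hcJm'
  have hym : y = m := S.SuccR_fun hy hsucc
  subst hym
  have hv'v : v' = v := hfun _ _ _ hFyv' hFmv
  subst hv'v
  rcases hcm' with rfl | hcm'lt
  · have huu' : u = u' := hfun _ _ _ hFcu hFm'u'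
    exact hnuv (huu' ▸ hu'v')
  · have hm'T : m' ∉ T := fun h => hmmin m' h hm'm
    have : S.lt' u u' := by
      by_contra hnn
      exact hm'T ⟨hm'C, c, hcC, hcJc, hcm'lt, u, u', hFcu, hFm'u', hnn⟩
    exact hnuv (S.lt_trans this hu'v')

/-- eventual weak anti-monotonicity on C in the not-R case -/
lemma noninc_tail (hsign : S.pP (fun x => ∃ y, Fd x y ∧ S.lt' x y))
    (hnR : S.pP (fun x => ¬ ∃ y u v, S.SuccR x y ∧ Fd x u ∧ Fd y v ∧ S.lt' u v)) :
    False := by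
  classical
  have himgD := pP_imgD S hFdP hfun hfa huni hEx
  obtain ⟨cJ, hcJC, hcJab⟩ := S.exists_C_above ((hnR.2.union hEx.2).union himgD.2)
  have goodE : ∀ z ∈ S.C, S.lt' cJ z → ∃ y, Fd z y := by
    intro z hz hcJz
    by_contra hq
    exact S.lt_asymm hcJz (hcJab z (Or.inl (Or.inr ⟨hz, hq⟩)) hz)
  have goodD : ∀ z ∈ S.C, S.lt' cJ z → ∀ y, Fd z y → y ∈ S.DD := by
    intro z hz hcJz
    by_contra hq
    exact S.lt_asymm hcJz (hcJab z (Or.inr ⟨hz, hq⟩) hz)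
  have goodnR : ∀ z ∈ S.C, S.lt' cJ z →
      ¬ ∃ y u v, S.SuccR z y ∧ Fd z u ∧ Fd y v ∧ S.lt' u v := by
    intro z hz hcJz
    by_contra hq
    exact S.lt_asymm hcJz (hcJab z (Or.inl (Or.inl ⟨hz, fun h => h hq⟩)) hz)
  -- single-step: the value weakly decreases along successors in the tail
  have step : ∀ z ∈ S.C, S.lt' cJ z → ∀ y, S.SuccR z y → ∀ u v, Fd z u → Fd y v →
      (v = u ∨ S.lt' v u) := by
    intro z hz hcJz y hy u v hFu hFv
    have hyC : y ∈ S.C := by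
      obtain ⟨y', hy'C, hy'⟩ := S.succ_C hz
      rwa [S.SuccR_fun hy hy']
    have hcJy : S.lt' cJ y := S.lt_trans hcJz hy.1
    have huD : u ∈ S.DD := goodD z hz hcJz u hFu
    have hvD : v ∈ S.DD := goodD y hyC hcJy v hFv
    rcases S.lt_total hvD huD with h | h | h
    · exact Or.inl h
    · exact Or.inr h
    · exact absurd ⟨y, u, v, hy, hFu, hFv, h⟩ (goodnR z hz hcJz)
  -- eventual weak anti-monotonicity
  have NonInc : ∀ c' ∈ S.C, ∀ c ∈ S.C, S.lt' cJ c → S.lt' c c' →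
      ∀ u v, Fd c u → Fd c' v → (v = u ∨ S.lt' v u) := by
    by_contra hn
    push_neg at hn
    set T := {c' ∈ S.C | ∃ c ∈ S.C, S.lt' cJ c ∧ S.lt' c c' ∧
      ∃ u v, Fd c u ∧ Fd c' v ∧ ¬ (v = u ∨ S.lt' v u)} with hT
    have hTne : T.Nonempty := by
      obtain ⟨c', hc'C, c, hcC, h1, h2, u, v, h3, h4, h5⟩ := hn
      refine ⟨c', hc'C, c, hcC, h1, h2, u, v, h3, h4, ?_⟩
      rintro (h | h)
      · exact (h5.1 h).elim
      · exact (h5.2 h).elim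
    obtain ⟨m, hmT, hmmin⟩ := S.wf_min (T := T) (fun z hz => hz.1) hTne
    obtain ⟨hmC, c, hcC, hcJc, hcm, u, v, hFcu, hFmv, hnuv⟩ := hmT
    set P := {z ∈ S.C | S.lt' z m ∧ (z = c ∨ S.lt' c z)} with hP
    have hPfin : P.Finite := (S.C_pred_finite hmC).subset (fun z hz => ⟨hz.1, hz.2.1⟩)
    obtain ⟨m', hm'P, hm'max⟩ := S.fin_max hPfin (fun z hz => S.C_sub_D hz.1)
      ⟨c, hcC, hcm, Or.inl rfl⟩
    have hm'C : m' ∈ S.C := hm'P.1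
    have hm'm : S.lt' m' m := hm'P.2.1
    have hcm' : m' = c ∨ S.lt' c m' := hm'P.2.2
    have hcJm' : S.lt' cJ m' := by
      rcases hcm' with rfl | h
      · exact hcJc
      · exact S.lt_trans hcJc h
    have hsucc : S.SuccR m' m := by
      refine ⟨hm'm, fun z hz => ?_⟩
      rcases S.lt_total (S.lt_D hz).2 (S.C_sub_D hmC) with h | h | h
      · exact Or.inl h
      · exfalso
        have hzC : z ∈ S.C := S.C_initial hmC (S.lt_D hz).2 h
        have hzP : z ∈ P := by
          refine ⟨hzC, h, ?_⟩
          rcases hcm' with rfl | h'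
          · exact Or.inr hz
          · exact Or.inr (S.lt_trans h' hz)
        rcases hm'max z hzP with rfl | h'
        · exact S.lt_irrefl hz
        · exact S.lt_asymm hz h'
      · exact Or.inr h
    obtain ⟨u', hFm'u'⟩ := goodE m' hm'C hcJm'
    have hstep := step m' hm'C hcJm' m hsucc u' v hFm'u' hFmv
    rcases hcm' with rfl | hcm'lt
    · have huu' : u = u' := hfun _ _ _ hFcu hFm'u'
      subst huu'
      exact hnuv hstep
    · have hm'T : m' ∉ T := fun h => hmmin m' h hm'm
      have hle : u' = u ∨ S.lt' u' u := by
        by_contra hnn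
        exact hm'T ⟨hm'C, c, hcC, hcJc, hcm'lt, u, u', hFcu, hFm'u', hnn⟩
      apply hnuv
      rcases hstep with rfl | h1
      · exact hle
      · rcases hle with rfl | h2
        · exact Or.inr h1
        · exact Or.inr (S.lt_trans h1 h2)
  -- case split on whether some tail point has value in C
  by_cases hcase : ∃ c₀ ∈ S.C, S.lt' cJ c₀ ∧ ∃ v ∈ S.C, Fd c₀ v
  · obtain ⟨c₀, hc₀C, hcJc₀, v₀, hv₀C, hFc₀⟩ := hcase
    have valC : ∀ c ∈ S.C, (c = c₀ ∨ S.lt' c₀ c) → ∀ u, Fd c u → u ∈ S.C := by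
      intro c hc hcc u hu
      rcases hcc with rfl | hlt
      · rwa [hfun _ _ _ hu hFc₀]
      · rcases NonInc c hc c₀ hc₀C hcJc₀ hlt v₀ u hFc₀ hu with rfl | h
        · exact hv₀C
        · exact S.C_initial hv₀C (S.lt_D h).1 h
    set V := {v ∈ S.C | ∃ c ∈ S.C, (c = c₀ ∨ S.lt' c₀ c) ∧ Fd c v} with hV
    have hVne : V.Nonempty := ⟨v₀, hv₀C, c₀, hc₀C, Or.inl rfl, hFc₀⟩
    obtain ⟨vs, hvsV, hvsmin⟩ := S.wf_min (T := V) (fun z hz => hz.1) hVne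
    obtain ⟨hvsC, cs, hcsC, hcsc₀, hFcs⟩ := hvsV
    have hcJcs : S.lt' cJ cs := by
      rcases hcsc₀ with rfl | h
      · exact hcJc₀
      · exact S.lt_trans hcJc₀ h
    have hstar : ∀ c ∈ S.C, S.lt' cs c → Fd c vs := by
      intro c hc hcsc
      have hcc₀ : c = c₀ ∨ S.lt' c₀ c := by
        rcases hcsc₀ with rfl | h
        · exact Or.inr hcsc
        · exact Or.inr (S.lt_trans h hcsc)
      obtain ⟨u, hu⟩ := goodE c hc (S.lt_trans hcJcs hcsc)
      have huV : u ∈ V := ⟨valC c hc hcc₀ u hu, c, hc, hcc₀, hu⟩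
      rcases NonInc c hc cs hcsC hcJcs hcsc vs u hFcs hu with rfl | h
      · exact hu
      · exact absurd h (hvsmin u huV)
    have hpPvs : S.pP (fun x => Fd x vs) := by
      refine ⟨P1_Fd_const hFdP (S.C_dcl hvsC), ?_⟩
      apply (S.C_le_finite hcsC).subset
      rintro c ⟨hcC, hnc⟩
      refine ⟨hcC, fun hlt => hnc (hstar c hcC hlt)⟩
    obtain ⟨a₀, ha₀⟩ := S.pM_nonempty
    have : vs = S.f a₀ := huni a₀ ha₀ vs (S.K2 hpPvs ha₀)
    exact S.pM_not_dcl (this ▸ S.f_pM ha₀) (S.C_dcl hvsC)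
  · push_neg at hcase
    obtain ⟨x, hxC, hcJx, c, hcC, hFxc⟩ :=
      sigma_lt_C S hFdP hfun hfa huni hEx hsign hcJC
    exact hcase x hxC hcJx c hcC hFxc

/-- the increasing case refutes the bad pair -/
lemma case_gt (hsign : S.pP (fun x => ∃ y, Fd x y ∧ S.lt' x y))
    (hbad : ∃ a ∈ S.pM, ∃ b ∈ S.pM, S.lt' a b ∧ (S.f b = S.f a ∨ S.lt' (S.f b) (S.f a))) :
    False := by
  rcases S.K1 (P1_Rset S hFdP hfun hfa huni hEx) with hR | hnR
  · obtain ⟨cJ, hcJC, Mono⟩ := mono_tail S hFdP hfun hfa huni hEx hR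
    have hΦ : S.pP (fun x => x ∈ S.DD ∧ S.lt' cJ x) := S.pP_and S.pP_D (S.pP_gtC hcJC)
    have hW := bad_transfer S hFdP hfun hfa huni hEx hbad hΦ
    obtain ⟨c, hcC, hcn⟩ := S.exists_C_avoid (hW.2.union (S.C_le_finite hcJC))
    have hcJc : S.lt' cJ c := by
      by_contra h
      exact hcn (Or.inr ⟨hcC, h⟩)
    have hWc : ∃ x u v, (x ∈ S.DD ∧ S.lt' cJ x) ∧ S.lt' x c ∧ Fd x u ∧ Fd c v ∧
        (v = u ∨ S.lt' v u) := by
      by_contra h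
      exact hcn (Or.inl ⟨hcC, h⟩)
    obtain ⟨x, u, v, ⟨hxD, hcJx⟩, hxc, hFxu, hFcv, hvu⟩ := hWc
    have hxC := S.C_initial hcC hxD hxc
    have hMono := Mono c hcC x hxC hcJx hxc u v hFxu hFcv
    rcases hvu with rfl | h
    · exact S.lt_irrefl hMono
    · exact S.lt_asymm hMono h
  · exact noninc_tail S hFdP hfun hfa huni hEx hsign hnR

/-- there is no bad pair -/
lemma no_bad :
    ¬ ∃ a ∈ S.pM, ∃ b ∈ S.pM, S.lt' a b ∧ (S.f b = S.f a ∨ S.lt' (S.f b) (S.f a)) := by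
  intro hbad
  rcases sign_cases S hFdP hfun hfa huni hEx with hgt | heq | hlt
  · exact case_gt S hFdP hfun hfa huni hEx hgt hbad
  · obtain ⟨a, ha, b, hb, hab, hor⟩ := hbad
    have hfa' : S.f a = a := by
      obtain ⟨y, h1, h2⟩ := S.K2 heq ha
      rw [← huni a ha y h1, h2]
    have hfb' : S.f b = b := by
      obtain ⟨y, h1, h2⟩ := S.K2 heq hb
      rw [← huni b hb y h1, h2]
    rcases hor with h | h
    · rw [hfa', hfb'] at h
      exact S.lt_irrefl (h ▸ hab)
    · rw [hfa', hfb'] at h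
      exact S.lt_asymm hab h
  · exact case_lt S hFdP hfun hfa huni hEx hlt hbad

end WithF

/-- the main result: f is an automorphism of (p(M), <) -/
lemma main_result :
    (∀ b ∈ S.pM, ∃ a ∈ S.pM, S.f a = b) ∧
    (∀ a ∈ S.pM, ∀ a' ∈ S.pM, S.f a = S.f a' → a = a') ∧
    (∀ a ∈ S.pM, ∀ b ∈ S.pM, S.lt' a b → S.lt' (S.f a) (S.f b)) := by
  obtain ⟨Fd, hFdP, hfun, hfa, huni, hEx⟩ := S.exists_F
  have hnb := no_bad S hFdP hfun hfa huni hEx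
  have hmono : ∀ a ∈ S.pM, ∀ b ∈ S.pM, S.lt' a b → S.lt' (S.f a) (S.f b) := by
    intro a ha b hb hab
    rcases S.lt_total (S.pM_sub_D (S.f_pM ha)) (S.pM_sub_D (S.f_pM hb)) with h | h | h
    · exact absurd ⟨a, ha, b, hb, hab, Or.inl h.symm⟩ hnb
    · exact h
    · exact absurd ⟨a, ha, b, hb, hab, Or.inr h⟩ hnb
  refine ⟨surj S hFdP hfun hfa huni hEx, ?_, hmono⟩
  intro a ha a' ha' heq
  rcases S.lt_total (S.pM_sub_D ha) (S.pM_sub_D ha') with h | h | h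
  · exact h
  · have := hmono a ha a' ha' h
    rw [heq] at this
    exact absurd this S.lt_irrefl
  · have := hmono a' ha' a ha h
    rw [heq] at this
    exact absurd this S.lt_irrefl


end Setup

end MainDev

/-- part of Lemma 5. If `p ∈ S₁(T)` is simple, witnessed by `C`
and `(D, <)`, then every relatively ∅-definable function `f : p(M) → p(M)` is an
automorphism of the linear order `(p(M), <)`. -/
theorem statement11 (L : FirstOrder.Language.{u, v}) (hL : L.card ≤ ℵ₀)
    (T : L.Theory) (hT : T.IsComplete)
    (M : Type w) [L.Structure M] (hMT : M ⊨ T) (hMinf : Infinite M)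
    (hsat : IsAleph1Saturated L M)
    (p : Set (L.Formula (↥(∅ : Set M) ⊕ Fin 1))) (C : Set M)
    (δ : L.Formula (↥(∅ : Set M) ⊕ Fin 1)) (lt : L.Formula (↥(∅ : Set M) ⊕ Fin 2))
    (hp : IsSimpleWitness (∅ : Set M) p C δ lt)
    (f : M → M) (hfmap : ∀ a ∈ typeSet (∅ : Set M) p, f a ∈ typeSet (∅ : Set M) p)
    (θ : L.Formula (↥(∅ : Set M) ⊕ Fin 2))
    (hgraph : ∀ a b : M,
      (a ∈ typeSet (∅ : Set M) p ∧ b ∈ typeSet (∅ : Set M) p ∧ defRel (∅ : Set M) θ a b) ↔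
      (a ∈ typeSet (∅ : Set M) p ∧ f a = b)) :
    (∀ b ∈ typeSet (∅ : Set M) p, ∃ a ∈ typeSet (∅ : Set M) p, f a = b) ∧
    (∀ a ∈ typeSet (∅ : Set M) p, ∀ a' ∈ typeSet (∅ : Set M) p, f a = f a' → a = a') ∧
    (∀ a ∈ typeSet (∅ : Set M) p, ∀ b ∈ typeSet (∅ : Set M) p,
      gRel (∅ : Set M) δ lt a b → gRel (∅ : Set M) δ lt (f a) (f b)) := by
  classical
  let S : Setup L M := ⟨hsat, p, C, δ, lt, hp, f, θ, hgraph⟩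
  exact S.main_result

end PaperDef
end
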